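/- arXiv:1912.10381 — 6 statements merged into one kernel-verified Lean document; each statement's English description precedes it below -/
import Mathlib

section
/- For every positive integer a, the three real numbers 1, log(a/(a+1)), and log((a+1)/(a+2)) are linearly independent over the rationals; that is, if q, p₁, p₂ are integers, not all zero, then q + p₁·log(a/(a+1)) + p₂·log((a+1)/(a+2)) ≠ 0. -/
/-!
Exponentiating a relation `q + p₁ log x + p₂ log y = 0`, where `x = a/(a+1)` and
`y = (a+1)/(a+2)`, makes `exp q = x^(-p₁) y^(-p₂)` rational, so `q = 0` because `e^n` is
irrational for every integer `n ≠ 0`. The latter is Hermite's argument: by repeated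
integration by parts the integrals `J_k = ∫₀¹ (x(1-x))^k e^{nx} dx` satisfy
`n^(2k+1) J_k = k! (a_k + b_k e^n)` with integers `a_k, b_k`, while `0 < J_k ≤ e^n / 4^k`;
so the positive numbers `a_k + b_k e^n` tend to `0`, which is impossible if `e^n` is rational.
Once `q = 0`, comparing `p`-adic valuations of `x^p₁ y^p₂ = 1` at a prime `p ∣ a+1` gives
`p₁ = p₂`, and `log x, log y < 0` then forces `p₁ = 0`.
-/

open Real intervalIntegral
open scoped Nat

noncomputable def hermiteIntegral (t : ℝ) (k : ℕ) : ℝ :=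
  ∫ x in (0 : ℝ)..1, (x * (1 - x)) ^ k * exp (t * x)

lemma linear_combination_hermiteIntegral {t : ℝ} {P P' : ℝ → ℝ}
    (hP : ∀ x, HasDerivAt P (P' x) x) (hP' : Continuous P') {c₀ c₁ c₂ : ℝ} {i j k : ℕ}
    (hPP' : ∀ x, P' x + t * P x =
      c₀ * (x * (1 - x)) ^ i + c₁ * (x * (1 - x)) ^ j + c₂ * (x * (1 - x)) ^ k) :
    c₀ * hermiteIntegral t i + c₁ * hermiteIntegral t j + c₂ * hermiteIntegral t k =
      P 1 * exp t - P 0 := by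
  have hPc : Continuous P := continuous_iff_continuousAt.2 fun x => (hP x).continuousAt
  have hderiv : ∀ x ∈ Set.uIcc (0 : ℝ) 1, HasDerivAt (fun x => P x * exp (t * x))
      ((P' x + t * P x) * exp (t * x)) x := fun x _ => by
    refine ((hP x).mul ((hasDerivAt_id' x).const_mul t).exp).congr_deriv ?_
    ring
  have hFTC :=
    integral_eq_sub_of_hasDerivAt hderiv (Continuous.intervalIntegrable (by fun_prop) _ _)
  simp only [hPP', add_mul, mul_assoc] at hFTC
  have hint : ∀ (c : ℝ) (m : ℕ), IntervalIntegrable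
      (fun x : ℝ => c * ((x * (1 - x)) ^ m * exp (t * x))) MeasureTheory.volume 0 1 :=
    fun c m => Continuous.intervalIntegrable (by fun_prop) _ _
  rw [integral_add ((hint c₀ i).add (hint c₁ j)) (hint c₂ k),
    integral_add (hint c₀ i) (hint c₁ j), integral_const_mul, integral_const_mul,
    integral_const_mul] at hFTC
  simpa [hermiteIntegral] using hFTC

lemma hasDerivAt_mul_one_sub_pow_succ (m : ℕ) (x : ℝ) :
    HasDerivAt (fun x : ℝ => (x * (1 - x)) ^ (m + 1))
      ((m + 1) * (x * (1 - x)) ^ m * (1 - 2 * x)) x := by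
  have h := ((hasDerivAt_id' x).mul ((hasDerivAt_id' x).const_sub 1)).pow (m + 1)
  refine h.congr_deriv ?_
  simp only [Pi.mul_apply, Nat.add_sub_cancel]
  push_cast
  ring

lemma mul_hermiteIntegral_zero (t : ℝ) : t * hermiteIntegral t 0 = exp t - 1 := by
  have h := linear_combination_hermiteIntegral (t := t) (P := fun _ => 1) (c₀ := t) (c₁ := 0)
    (c₂ := 0) (i := 0) (j := 0) (k := 0) (fun x => hasDerivAt_const x 1) continuous_const
    (fun x => by ring)
  linear_combination h

lemma sq_mul_hermiteIntegral_one (t : ℝ) :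
    t ^ 2 * hermiteIntegral t 1 + 2 * hermiteIntegral t 0 = exp t + 1 := by
  have hP : ∀ x : ℝ, HasDerivAt (fun x => t * (x * (1 - x)) ^ 1 - (1 - 2 * x))
      (t * (1 * (x * (1 - x)) ^ 0 * (1 - 2 * x)) + 2) x := fun x => by
    refine (((hasDerivAt_mul_one_sub_pow_succ 0 x).const_mul t).sub
      (((hasDerivAt_id' x).const_mul 2).const_sub 1)).congr_deriv ?_
    ring
  have h := linear_combination_hermiteIntegral (c₀ := t ^ 2) (c₁ := 2) (c₂ := 0)
    (i := 1) (j := 0) (k := 0) hP (by fun_prop) (fun x => by ring)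
  linear_combination h

lemma sq_mul_hermiteIntegral_add_two (t : ℝ) (m : ℕ) :
    t ^ 2 * hermiteIntegral t (m + 2) =
      (m + 2) * (m + 1) * hermiteIntegral t m -
        (4 * m + 6) * (m + 2) * hermiteIntegral t (m + 1) := by
  -- The antiderivative vanishes at `0` and `1`, so there are no boundary terms.
  have hP : ∀ x : ℝ, HasDerivAt
      (fun x => t * (x * (1 - x)) ^ (m + 2) - (m + 2) * ((x * (1 - x)) ^ (m + 1) * (1 - 2 * x)))
      (t * ((m + 2) * (x * (1 - x)) ^ (m + 1) * (1 - 2 * x)) -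
        (m + 2) * ((m + 1) * (x * (1 - x)) ^ m * (1 - 2 * x) * (1 - 2 * x) +
          (x * (1 - x)) ^ (m + 1) * (-2))) x := fun x => by
    have h2 := hasDerivAt_mul_one_sub_pow_succ (m + 1) x
    push_cast at h2
    refine ((h2.const_mul t).sub (((hasDerivAt_mul_one_sub_pow_succ m x).mul
      (((hasDerivAt_id' x).const_mul 2).const_sub 1)).const_mul _)).congr_deriv ?_
    ring
  have h := linear_combination_hermiteIntegral (c₀ := t ^ 2) (c₁ := -((m + 2) * (m + 1)))
    (c₂ := (4 * m + 6) * (m + 2)) (i := m + 2) (j := m) (k := m + 1) hP (by fun_prop)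
    (fun x => by ring)
  linear_combination h

lemma exists_int_hermiteIntegral_eq (n : ℤ) (k : ℕ) :
    ∃ a b : ℤ, (n : ℝ) ^ (2 * k + 1) * hermiteIntegral n k = k ! * (a + b * exp n) := by
  induction k using Nat.twoStepInduction with
  | zero => exact ⟨-1, 1, by simp [mul_hermiteIntegral_zero]; ring⟩
  | one =>
    refine ⟨n + 2, n - 2, ?_⟩
    have h0 := mul_hermiteIntegral_zero n
    have h1 := sq_mul_hermiteIntegral_one n
    push_cast
    linear_combination (n : ℝ) * h1 - 2 * h0
  | more m ih₀ ih₁ =>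
    obtain ⟨a₀, b₀, h₀⟩ := ih₀
    obtain ⟨a₁, b₁, h₁⟩ := ih₁
    refine ⟨n ^ 2 * a₀ - (4 * m + 6) * a₁, n ^ 2 * b₀ - (4 * m + 6) * b₁, ?_⟩
    have hrec := sq_mul_hermiteIntegral_add_two n m
    simp only [Nat.factorial_succ] at h₁ ⊢
    push_cast at h₁ ⊢
    linear_combination (n : ℝ) ^ (2 * m + 3) * hrec + (m + 2) * (m + 1) * (n : ℝ) ^ 2 * h₀ -
      (4 * m + 6) * (m + 2) * h₁

lemma hermiteIntegral_pos (t : ℝ) (k : ℕ) : 0 < hermiteIntegral t k := by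
  refine intervalIntegral_pos_of_pos_on (Continuous.intervalIntegrable (by fun_prop) _ _)
    (fun x hx => ?_) one_pos
  have : 0 < 1 - x := sub_pos.2 hx.2
  have : 0 < x := hx.1
  positivity

lemma hermiteIntegral_le {t : ℝ} (ht : 0 ≤ t) (k : ℕ) :
    hermiteIntegral t k ≤ exp t / 4 ^ k := by
  have hbound :
      ∀ x ∈ Set.Icc (0 : ℝ) 1, (x * (1 - x)) ^ k * exp (t * x) ≤ exp t / 4 ^ k := by
    rintro x ⟨hx₀, hx₁⟩
    have hg : (x * (1 - x)) ^ k ≤ (1 / 4) ^ k := pow_le_pow_left₀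
      (mul_nonneg hx₀ (sub_nonneg.2 hx₁)) (by nlinarith [sq_nonneg (x - 1 / 2)]) k
    have he : exp (t * x) ≤ exp t := exp_le_exp.2 (mul_le_of_le_one_right ht hx₁)
    calc (x * (1 - x)) ^ k * exp (t * x) ≤ (1 / 4) ^ k * exp t :=
          mul_le_mul hg he (exp_pos _).le (by positivity)
      _ = exp t / 4 ^ k := by rw [one_div_pow, one_div_mul_eq_div]
  simpa [hermiteIntegral] using integral_mono_on zero_le_one
    (Continuous.intervalIntegrable (by fun_prop) _ _)
    (intervalIntegrable_const (μ := MeasureTheory.volume)) hbound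

lemma irrational_of_forall_exists_int_pos_lt {x : ℝ}
    (h : ∀ ε > 0, ∃ a b : ℤ, 0 < a + b * x ∧ a + b * x < ε) : Irrational x := by
  rintro ⟨r, rfl⟩
  obtain ⟨a, b, hpos, hlt⟩ := h (1 / r.den) (by positivity)
  have hden : (0 : ℝ) < r.den := by exact_mod_cast r.pos
  have hcast : ((r.den * a + b * r.num : ℤ) : ℝ) = r.den * (a + b * r) := by
    push_cast
    rw [Rat.cast_def]
    field_simp
  have h₀ : (0 : ℝ) < (r.den * a + b * r.num : ℤ) := by rw [hcast]; positivity
  have h₁ : ((r.den * a + b * r.num : ℤ) : ℝ) < 1 := by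
    rw [hcast, ← lt_div_iff₀' hden]
    exact hlt
  norm_cast at h₀ h₁
  omega

open Filter Topology in
lemma irrational_exp_natCast {n : ℕ} (hn : n ≠ 0) : Irrational (exp n) := by
  refine irrational_of_forall_exists_int_pos_lt fun ε hε => ?_
  have hlim :
      Tendsto (fun k : ℕ => n * exp n * (((n : ℝ) ^ 2 / 4) ^ k / k !)) atTop (𝓝 0) := by
    simpa using (FloorSemiring.tendsto_pow_div_factorial_atTop ((n : ℝ) ^ 2 / 4)).const_mul
      (n * exp n)
  obtain ⟨k, hk⟩ := (hlim.eventually (gt_mem_nhds hε)).exists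
  obtain ⟨a, b, hab⟩ := exists_int_hermiteIntegral_eq n k
  have hfac : (0 : ℝ) < k ! := by positivity
  have heq : (a : ℝ) + b * exp n = (n : ℝ) ^ (2 * k + 1) * hermiteIntegral n k / k ! := by
    push_cast at hab
    rw [hab, mul_div_cancel_left₀ _ hfac.ne']
  refine ⟨a, b, ?_, ?_⟩
  · rw [heq]
    have := hermiteIntegral_pos n k
    have : (0 : ℝ) < n := by positivity
    positivity
  · calc (a : ℝ) + b * exp n
        ≤ (n : ℝ) ^ (2 * k + 1) * (exp n / 4 ^ k) / k ! := by
          rw [heq]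
          gcongr
          exact hermiteIntegral_le n.cast_nonneg k
      _ = n * exp n * (((n : ℝ) ^ 2 / 4) ^ k / k !) := by
          rw [div_pow, pow_succ, pow_mul]
          ring
      _ < ε := hk

lemma irrational_exp_intCast {n : ℤ} (hn : n ≠ 0) : Irrational (exp n) := by
  obtain ⟨m, rfl | rfl⟩ := n.eq_nat_or_neg
  · exact_mod_cast irrational_exp_natCast (n := m) (by omega)
  · rw [Int.cast_neg, exp_neg, irrational_inv_iff]
    exact_mod_cast irrational_exp_natCast (n := m) (by omega)

lemma eq_of_consecutive_ratios_zpow_mul_zpow_eq_one {a : ℕ} (ha : a ≠ 0) {k l : ℤ}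
    (h : ((a : ℚ) / (a + 1)) ^ k * (((a : ℚ) + 1) / (a + 2)) ^ l = 1) : k = l := by
  set p := (a + 1).minFac
  have hp : p.Prime := Nat.minFac_prime (by omega)
  have := Fact.mk hp
  have hpa₁ : p ∣ a + 1 := Nat.minFac_dvd _
  have hpa₀ : ¬ p ∣ a := fun hpa => hp.not_dvd_one ((Nat.dvd_add_right hpa).1 hpa₁)
  have hpa₂ : ¬ p ∣ a + 2 := fun hpa => hp.not_dvd_one ((Nat.dvd_add_right hpa₁).1 hpa)
  have hv : 0 < padicValNat p (a + 1) := one_le_padicValNat_of_dvd (by omega) hpa₁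
  have hval := congrArg (padicValRat p) h
  rw [show (a : ℚ) + 1 = (a + 1 : ℕ) by push_cast; rfl,
    show (a : ℚ) + 2 = (a + 2 : ℕ) by push_cast; rfl] at hval
  rw [padicValRat.mul (by positivity) (by positivity), padicValRat.zpow, padicValRat.zpow,
    padicValRat.div (by positivity) (by positivity),
    padicValRat.div (by positivity) (by positivity),
    padicValRat.of_nat, padicValRat.of_nat, padicValRat.of_nat,
    padicValNat.eq_zero_of_not_dvd hpa₀, padicValNat.eq_zero_of_not_dvd hpa₂,
    padicValRat.one, Nat.cast_zero] at hval
  have : (l - k) * (padicValNat p (a + 1) : ℤ) = 0 := by linear_combination hval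
  rcases mul_eq_zero.1 this with hkl | hv' <;> omega

theorem log_consecutive_ratios_linear_independent (a : ℕ) (ha : 0 < a) :
    ∀ q p₁ p₂ : ℤ, ¬(q = 0 ∧ p₁ = 0 ∧ p₂ = 0) →
      (q : ℝ) + (p₁ : ℝ) * Real.log ((a : ℝ) / (a + 1)) +
        (p₂ : ℝ) * Real.log (((a : ℝ) + 1) / (a + 2)) ≠ 0 := by
  intro q p₁ p₂ hne h
  have hX : (0 : ℝ) < a / (a + 1) := by positivity
  have hY : (0 : ℝ) < (a + 1) / (a + 2) := by positivity
  have hrel : exp q * ((a / (a + 1)) ^ p₁ * ((a + 1) / (a + 2)) ^ p₂) = 1 := by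
    have := congrArg exp h
    rwa [exp_add, exp_add, ← log_zpow, ← log_zpow, exp_log (zpow_pos hX p₁),
      exp_log (zpow_pos hY p₂), exp_zero, mul_assoc] at this
  set r : ℚ := ((a : ℚ) / (a + 1)) ^ p₁ * (((a : ℚ) + 1) / (a + 2)) ^ p₂ with hr
  have hrat : (r : ℝ) = (a / (a + 1)) ^ p₁ * ((a + 1) / (a + 2)) ^ p₂ := by
    push_cast [hr]
    rfl
  obtain rfl : q = 0 := by
    by_contra hq
    refine irrational_exp_intCast hq ⟨r⁻¹, ?_⟩
    rw [Rat.cast_inv, hrat]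
    exact (eq_inv_of_mul_eq_one_left hrel).symm
  obtain rfl : p₁ = p₂ := by
    refine eq_of_consecutive_ratios_zpow_mul_zpow_eq_one ha.ne' (?_ : r = 1)
    have : (r : ℝ) = 1 := by simpa [hrat] using hrel
    exact_mod_cast this
  have hlogX : log (a / (a + 1) : ℝ) < 0 :=
    log_neg hX (by rw [div_lt_one (by positivity)]; linarith)
  have hlogY : log ((a + 1) / (a + 2) : ℝ) < 0 :=
    log_neg hY (by rw [div_lt_one (by positivity)]; linarith)
  have hp : (p₁ : ℝ) = 0 := by
    refine (mul_eq_zero.1 (?_ : (p₁ : ℝ) * (log (a / (a + 1)) + log ((a + 1) / (a + 2))) = 0)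
      ).resolve_right (by linarith)
    simpa [mul_add] using h
  exact hne ⟨rfl, by exact_mod_cast hp, by exact_mod_cast hp⟩
end

section
/- Let I(n) := ∫₀¹ (x(1-x)/(1+x))ⁿ · dx/(1+x) and let dₙ := lcm(1,2,…,n). Then there exist sequences of rational numbers A(n) and B(n) such that I(n) = A(n) + B(n)·log 2 for all n ≥ 0, and such that dₙ·A(n) and dₙ·B(n) are integers for all n ≥ 1. -/
/-!
Substituting `u = 1 + x` turns `I(n)` into `∫₁² q(u)ⁿ u⁻ⁿ⁻¹ du`, where
`q = (X - 1)(2 - X) ∈ ℤ[X]`. Writing `qⁿ = ∑ aₖ Xᵏ`, the term `k = n` contributes `aₙ log 2`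
and a term `k ≠ n` contributes `aₖ (2ᵏ⁻ⁿ - 1) / (k - n)`. The involution `u ↦ 2 / u` fixes
the integrand; algebraically, `q(2X) = 2 X² q(1/X)`, whence `aₖ 2ᵏ⁻ⁿ = a₂ₙ₋ₖ`. So each term
`k ≠ n` is the integer `a₂ₙ₋ₖ - aₖ` divided by `k - n`, and `0 < |k - n| ≤ n`.
-/

/-- The Alladi–Robinson integral `I(n) = ∫₀¹ (x(1-x)/(1+x))ⁿ dx/(1+x)`. -/
noncomputable def AR (n : ℕ) : ℝ :=
  ∫ x in (0:ℝ)..1, (x * (1 - x) / (1 + x)) ^ n / (1 + x)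

/-- `d(n) = lcm(1, 2, …, n)`. -/
def dd (n : ℕ) : ℕ := (Finset.Icc 1 n).lcm id

open Polynomial Finset

theorem Polynomial.reflect_pow {R : Type*} [CommSemiring R] {p : R[X]} {d : ℕ}
    (hp : p.natDegree ≤ d) (n : ℕ) : (p ^ n).reflect (d * n) = p.reflect d ^ n := by
  induction n with
  | zero => simp
  | succ n ih =>
    rw [pow_succ, pow_succ, Nat.mul_succ,
      reflect_mul _ _ ((natDegree_pow_le_of_le n hp).trans_eq (mul_comm n d)) hp, ih]

theorem Polynomial.coeff_pow_mul_pow_of_comp_eq_C_mul_reflect {R : Type*} [CommSemiring R]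
    {p : R[X]} {d : ℕ} {b c : R} (hp : p.natDegree ≤ d)
    (hpc : p.comp (C c * X) = C b * p.reflect d) (n : ℕ) {k : ℕ} (hk : k ≤ d * n) :
    (p ^ n).coeff k * c ^ k = b ^ n * (p ^ n).coeff (d * n - k) := by
  have h := congrArg (coeff · k) (congrArg (· ^ n) hpc)
  simp only [← pow_comp, mul_pow, ← C_pow, ← reflect_pow hp] at h
  rwa [comp_C_mul_X_coeff, coeff_C_mul, coeff_reflect, revAt_le hk] at h

theorem integral_zpow_sub_one {a b : ℝ} (ha : 0 < a) (hb : 0 < b) (m : ℤ) :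
    ∫ u in a..b, u ^ (m - 1) = if m = 0 then Real.log (b / a) else (b ^ m - a ^ m) / m := by
  have h0 : (0 : ℝ) ∉ Set.uIcc a b := by
    rw [Set.mem_uIcc]; rintro (⟨h, -⟩ | ⟨h, -⟩) <;> linarith
  split_ifs with hm
  · simp [hm, integral_inv h0]
  · rw [integral_zpow (Or.inr ⟨by omega, h0⟩)]
    simp

theorem aeval_div_pow_eq_sum {K : Type*} [Field K] {p : ℤ[X]} {N : ℕ} (hp : p.natDegree < N)
    {u : K} (hu : u ≠ 0) (e : ℕ) :
    aeval u p / u ^ e = ∑ k ∈ range N, (p.coeff k : K) * u ^ ((k : ℤ) - e) := by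
  rw [aeval_eq_sum_range' hp, sum_div]
  refine sum_congr rfl fun k _ => ?_
  rw [zpow_sub₀ hu, zpow_natCast, zpow_natCast, zsmul_eq_mul, mul_div_assoc]

theorem exists_int_eq_mul_sum_div {ι : Type*} (s : Finset ι) (d : ℤ) (x m : ι → ℤ)
    (hm : ∀ i ∈ s, m i ∣ d) : ∃ z : ℤ, (d : ℚ) * ∑ i ∈ s, (x i : ℚ) / m i = z := by
  refine ⟨∑ i ∈ s, d / m i * x i, ?_⟩
  rw [mul_sum, Int.cast_sum]
  refine sum_congr rfl fun i hi => ?_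
  rcases eq_or_ne (m i) 0 with h | h
  · simp [h]
  · rw [Int.cast_mul, Int.cast_div (hm i hi) (by exact_mod_cast h)]
    ring

noncomputable def arPoly : ℤ[X] := (X - 1) * (2 - X)

noncomputable def arCoeff (n k : ℕ) : ℤ := (arPoly ^ n).coeff k

theorem natDegree_arPoly_le : arPoly.natDegree ≤ 2 := by
  unfold arPoly; compute_degree

theorem arPoly_comp_two_mul_X : arPoly.comp (C 2 * X) = C 2 * arPoly.reflect 2 := by
  have hq : arPoly = C (-2) * X ^ 0 + C 3 * X ^ 1 + C (-1) * X ^ 2 := by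
    simp only [arPoly, C_neg, C_1, map_ofNat]; ring
  rw [hq]
  simp only [reflect_add, reflect_C_mul_X_pow, add_comp, mul_comp, C_comp, X_comp, pow_comp]
  norm_num [revAt_le]
  ring

theorem two_pow_mul_arCoeff {n k : ℕ} (hk : k ≤ 2 * n) :
    (arCoeff n k : ℝ) * 2 ^ ((k : ℤ) - n) = arCoeff n (2 * n - k) := by
  have h := coeff_pow_mul_pow_of_comp_eq_C_mul_reflect natDegree_arPoly_le
    arPoly_comp_two_mul_X n hk
  rw [zpow_sub₀ two_ne_zero, zpow_natCast, zpow_natCast, mul_div_assoc',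
    div_eq_iff (by positivity)]
  exact_mod_cast h.trans (mul_comm _ _)

theorem AR_eq_integral (n : ℕ) :
    AR n = ∫ u in (1 : ℝ)..2, aeval u (arPoly ^ n) / u ^ (n + 1) := by
  have : ∀ x : ℝ, (x * (1 - x) / (1 + x)) ^ n / (1 + x)
      = aeval (1 + x) (arPoly ^ n) / (1 + x) ^ (n + 1) := fun x => by
    simp only [arPoly, map_pow, map_mul, map_sub, aeval_X, map_ofNat, map_one]
    rw [div_pow, div_div, ← pow_succ]; ring
  simp only [AR, this, intervalIntegral.integral_comp_add_left
    (fun u : ℝ => aeval u (arPoly ^ n) / u ^ (n + 1)) 1]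
  norm_num

theorem AR_eq_sum_arCoeff_mul_integral (n : ℕ) :
    AR n = ∑ k ∈ range (2 * n + 1),
      (arCoeff n k : ℝ) * ∫ u in (1 : ℝ)..2, u ^ ((k : ℤ) - n - 1) := by
  have hdeg : (arPoly ^ n).natDegree < 2 * n + 1 :=
    Nat.lt_succ_of_le ((natDegree_pow_le_of_le n natDegree_arPoly_le).trans_eq (mul_comm n 2))
  have hexp : ∀ u ∈ Set.uIcc (1 : ℝ) 2, aeval u (arPoly ^ n) / u ^ (n + 1)
      = ∑ k ∈ range (2 * n + 1), (arCoeff n k : ℝ) * u ^ ((k : ℤ) - n - 1) := fun u hu => by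
    rw [Set.uIcc_of_le one_le_two] at hu
    rw [aeval_div_pow_eq_sum hdeg (by linarith [hu.1]) (n + 1)]
    simp only [Nat.cast_succ, sub_add_eq_sub_sub, arCoeff]
  rw [AR_eq_integral, intervalIntegral.integral_congr hexp, intervalIntegral.integral_finsetSum]
  · simp only [intervalIntegral.integral_const_mul]
  · intro k _
    refine (intervalIntegral.intervalIntegrable_zpow (Or.inr ?_)).const_mul _
    rw [Set.mem_uIcc]; norm_num

noncomputable def arRatPart (n : ℕ) : ℚ :=
  ∑ k ∈ (range (2 * n + 1)).erase n,
    ((arCoeff n (2 * n - k) - arCoeff n k : ℤ) : ℚ) / ((k : ℤ) - n : ℤ)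

theorem AR_eq_arRatPart_add_mul_log_two (n : ℕ) :
    AR n = arRatPart n + arCoeff n n * Real.log 2 := by
  rw [AR_eq_sum_arCoeff_mul_integral,
    ← add_sum_erase _ _ (mem_range.2 (by omega : n < 2 * n + 1)), add_comm]
  congr 1
  · rw [arRatPart, Rat.cast_sum]
    refine sum_congr rfl fun k hk => ?_
    rw [mem_erase, mem_range] at hk
    have hkn : (k : ℤ) - n ≠ 0 := by omega
    rw [integral_zpow_sub_one one_pos two_pos, if_neg hkn, one_zpow]
    push_cast
    rw [← two_pow_mul_arCoeff (by omega : k ≤ 2 * n)]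
    ring
  · simp

theorem dvd_dd {n t : ℕ} (h1 : 1 ≤ t) (h2 : t ≤ n) : t ∣ dd n :=
  Finset.dvd_lcm (mem_Icc.2 ⟨h1, h2⟩)

theorem exists_int_eq_dd_mul_arRatPart (n : ℕ) : ∃ z : ℤ, (dd n : ℚ) * arRatPart n = z := by
  obtain ⟨z, hz⟩ := exists_int_eq_mul_sum_div ((range (2 * n + 1)).erase n) (dd n)
    (fun k => arCoeff n (2 * n - k) - arCoeff n k) (fun k => (k : ℤ) - n) fun k hk => by
      rw [mem_erase, mem_range] at hk
      rw [← Int.natAbs_dvd_natAbs, Int.natAbs_natCast]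
      exact dvd_dd (by omega) (by omega)
  exact ⟨z, by rw [← hz, Int.cast_natCast, arRatPart]⟩

theorem AR_rational_structure :
    ∃ A B : ℕ → ℚ,
      (∀ n : ℕ, AR n = (A n : ℝ) + (B n : ℝ) * Real.log 2) ∧
      (∀ n : ℕ, 1 ≤ n → (∃ z : ℤ, (dd n : ℚ) * A n = z) ∧ (∃ z : ℤ, (dd n : ℚ) * B n = z)) :=
  ⟨arRatPart, fun n => arCoeff n n,
    fun n => by exact_mod_cast AR_eq_arRatPart_add_mul_log_two n,
    fun n _ => ⟨exists_int_eq_dd_mul_arRatPart n, dd n * arCoeff n n, by push_cast; rfl⟩⟩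
end

section
/- Let I(n) := ∫₀¹ (x(1-x)/(1+x))ⁿ · dx/(1+x). Then I(n) > 0 for all n and lim_{n→∞} (log I(n))/n = log(3 - 2√2). -/
open Filter

/-! The base `x(1-x)/(1+x)` attains its maximum `3 - 2√2` on `[0,1]` at the interior point
`√2 - 1`. Bounding the integrand by this maximum gives `I(n) ≤ C (3 - 2√2)ⁿ`; for every
`c < 3 - 2√2` the integrand exceeds a constant multiple of `cⁿ` on a fixed neighbourhood of
`√2 - 1`, giving `I(n) ≥ K cⁿ`. So `I(n)^(1/n)` is squeezed to `3 - 2√2`. -/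

open Real Set Topology

section GrowthRate

variable {u : ℕ → ℝ} {M : ℝ}

lemma tendsto_log_mul_pow_div {K c : ℝ} (hK : 0 < K) (hc : 0 < c) :
    Tendsto (fun n : ℕ => log (K * c ^ n) / n) atTop (𝓝 (log c)) := by
  have h : Tendsto (fun n : ℕ => log K / n + log c) atTop (𝓝 (0 + log c)) :=
    (tendsto_const_div_atTop_nhds_zero_nat _).add_const _
  rw [zero_add] at h
  refine h.congr' ?_
  filter_upwards [eventually_ne_atTop 0] with n hn
  rw [log_mul hK.ne' (pow_pos hc n).ne', log_pow]
  field_simp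

lemma pos_of_forall_mul_pow_le (hM : 0 < M)
    (hlower : ∀ c, 0 < c → c < M → ∃ K > 0, ∀ n, K * c ^ n ≤ u n) (n : ℕ) : 0 < u n := by
  obtain ⟨K, hK, hKu⟩ := hlower (M / 2) (half_pos hM) (half_lt_self hM)
  exact lt_of_lt_of_le (by positivity) (hKu n)

theorem tendsto_log_div_of_pow_bounds {C : ℝ} (hM : 0 < M) (hupper : ∀ n, u n ≤ C * M ^ n)
    (hlower : ∀ c, 0 < c → c < M → ∃ K > 0, ∀ n, K * c ^ n ≤ u n) :
    Tendsto (fun n : ℕ => log (u n) / n) atTop (𝓝 (log M)) := by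
  have hu := pos_of_forall_mul_pow_le hM hlower
  have hC : 0 < C := pos_of_mul_pos_left ((hu 0).trans_le (hupper 0)) (pow_nonneg hM.le 0)
  rw [tendsto_order]
  constructor
  · intro b hb
    set c := exp ((b + log M) / 2)
    have hbc : b < log c := by rw [log_exp]; linarith
    have hcM : c < M := by rw [← exp_log hM]; exact exp_lt_exp.2 (by linarith)
    obtain ⟨K, hK, hKu⟩ := hlower c (exp_pos _) hcM
    filter_upwards [(tendsto_log_mul_pow_div hK (exp_pos _)).eventually_const_lt hbc] with n hn
    exact hn.trans_le (div_le_div_of_nonneg_right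
      (log_le_log (by positivity) (hKu n)) n.cast_nonneg)
  · intro b hb
    filter_upwards [(tendsto_log_mul_pow_div hC hM).eventually_lt_const hb] with n hn
    exact lt_of_le_of_lt (div_le_div_of_nonneg_right
      (log_le_log (hu n) (hupper n)) n.cast_nonneg) hn

end GrowthRate

section IntegralPowMul

variable {f g : ℝ → ℝ} {a b : ℝ}

lemma intervalIntegrable_pow_mul (hf : ContinuousOn f (Icc a b)) (hg : ContinuousOn g (Icc a b))
    (n : ℕ) {s t : ℝ} (has : a ≤ s) (hst : s ≤ t) (htb : t ≤ b) :
    IntervalIntegrable (fun x => f x ^ n * g x) MeasureTheory.volume s t :=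
  (((hf.pow n).mul hg).mono (Icc_subset_Icc has htb)).intervalIntegrable_of_Icc hst

theorem integral_pow_mul_le {M : ℝ} (hab : a ≤ b) (hf : ContinuousOn f (Icc a b))
    (hg : ContinuousOn g (Icc a b)) (hf0 : ∀ x ∈ Icc a b, 0 ≤ f x)
    (hfM : ∀ x ∈ Icc a b, f x ≤ M) (hg0 : ∀ x ∈ Icc a b, 0 ≤ g x) (n : ℕ) :
    ∫ x in a..b, f x ^ n * g x ≤ (∫ x in a..b, g x) * M ^ n := by
  rw [mul_comm, ← intervalIntegral.integral_const_mul]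
  refine intervalIntegral.integral_mono_on hab
    (intervalIntegrable_pow_mul hf hg n le_rfl hab le_rfl)
    ((hg.intervalIntegrable_of_Icc hab).const_mul _) fun x hx => ?_
  exact mul_le_mul_of_nonneg_right (pow_le_pow_left₀ (hf0 x hx) (hfM x hx) n) (hg0 x hx)

theorem exists_mul_pow_le_integral_pow_mul {c x₀ : ℝ} (hf : ContinuousOn f (Icc a b))
    (hg : ContinuousOn g (Icc a b)) (hf0 : ∀ x ∈ Icc a b, 0 ≤ f x)
    (hg0 : ∀ x ∈ Icc a b, 0 ≤ g x) (hx₀ : x₀ ∈ Ioo a b) (hc : 0 ≤ c) (hcf : c < f x₀)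
    (hgx₀ : 0 < g x₀) :
    ∃ K > 0, ∀ n : ℕ, K * c ^ n ≤ ∫ x in a..b, f x ^ n * g x := by
  have hnhds : Icc a b ∈ 𝓝 x₀ := Icc_mem_nhds hx₀.1 hx₀.2
  have hev : ∀ᶠ x in 𝓝 x₀, x ∈ Icc a b ∧ c < f x ∧ g x₀ / 2 < g x :=
    Eventually.and hnhds (((hf.continuousAt hnhds).eventually_const_lt hcf).and
      ((hg.continuousAt hnhds).eventually_const_lt (half_lt_self hgx₀)))
  obtain ⟨ε, hε, hball⟩ := Metric.nhds_basis_closedBall.eventually_iff.1 hev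
  simp only [Real.closedBall_eq_Icc] at hball
  have hlo : a ≤ x₀ - ε := (hball ⟨le_rfl, by linarith⟩).1.1
  have hhi : x₀ + ε ≤ b := (hball ⟨by linarith, le_rfl⟩).1.2
  refine ⟨ε * g x₀, by positivity, fun n => ?_⟩
  calc ε * g x₀ * c ^ n = ∫ _ in (x₀ - ε)..(x₀ + ε), c ^ n * (g x₀ / 2) := by
        rw [intervalIntegral.integral_const, smul_eq_mul]; ring
    _ ≤ ∫ x in (x₀ - ε)..(x₀ + ε), f x ^ n * g x := by
        refine intervalIntegral.integral_mono_on (by linarith) intervalIntegrable_const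
          (intervalIntegrable_pow_mul hf hg n hlo (by linarith) hhi) fun x hx => ?_
        obtain ⟨hxab, hcfx, hgx⟩ := hball hx
        exact mul_le_mul (pow_le_pow_left₀ hc hcfx.le n) hgx.le (by positivity)
          (pow_nonneg (hf0 x hxab) n)
    _ ≤ ∫ x in a..b, f x ^ n * g x := by
        refine intervalIntegral.integral_mono_interval hlo (by linarith) hhi ?_
          (intervalIntegrable_pow_mul hf hg n le_rfl (hlo.trans (by linarith)) le_rfl)
        filter_upwards [MeasureTheory.ae_restrict_mem measurableSet_Ioc] with x hx
        have hx' : x ∈ Icc a b := Ioc_subset_Icc_self hx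
        exact mul_nonneg (pow_nonneg (hf0 x hx') n) (hg0 x hx')

end IntegralPowMul

lemma AR_eq_integral_pow_mul (n : ℕ) :
    AR n = ∫ x in (0:ℝ)..1, (x * (1 - x) / (1 + x)) ^ n * (1 + x)⁻¹ := by
  simp only [AR, div_eq_mul_inv]

/-- `x(1-x)/(1+x) = 3 - ((1+x) + 2/(1+x))`, so this is AM–GM for `1 + x` and `2/(1+x)`. -/
lemma mul_one_sub_div_one_add_le {x : ℝ} (hx : 0 ≤ x) :
    x * (1 - x) / (1 + x) ≤ 3 - 2 * √2 := by
  rw [div_le_iff₀ (by linarith)]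
  nlinarith [sq_nonneg (x + 1 - √2), sq_sqrt (zero_le_two : (0:ℝ) ≤ 2)]

lemma mul_one_sub_div_one_add_at_sqrt_two_sub_one :
    (√2 - 1) * (1 - (√2 - 1)) / (1 + (√2 - 1)) = 3 - 2 * √2 := by
  rw [add_sub_cancel, div_eq_iff (by positivity)]
  linear_combination sq_sqrt (zero_le_two : (0:ℝ) ≤ 2)

theorem AR_pos_and_decay :
    (∀ n : ℕ, 0 < AR n) ∧
    Tendsto (fun n : ℕ => Real.log (AR n) / (n : ℝ)) atTop
      (nhds (Real.log (3 - 2 * Real.sqrt 2))) := by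
  have hsqrt : 1 < √2 ∧ √2 < 3 / 2 := by
    constructor <;> nlinarith [sq_sqrt (zero_le_two : (0:ℝ) ≤ 2), sqrt_nonneg 2]
  have hM : 0 < 3 - 2 * √2 := by linarith
  have hf : ContinuousOn (fun x : ℝ => x * (1 - x) / (1 + x)) (Icc 0 1) :=
    ContinuousOn.div (by fun_prop) (by fun_prop) fun x hx => by linarith [hx.1]
  have hg : ContinuousOn (fun x : ℝ => (1 + x)⁻¹) (Icc 0 1) :=
    ContinuousOn.inv₀ (by fun_prop) fun x hx => by linarith [hx.1]
  have hf0 : ∀ x ∈ Icc (0:ℝ) 1, 0 ≤ x * (1 - x) / (1 + x) := fun x hx =>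
    div_nonneg (mul_nonneg hx.1 (by linarith [hx.2])) (by linarith [hx.1])
  have hg0 : ∀ x ∈ Icc (0:ℝ) 1, 0 ≤ (1 + x)⁻¹ := fun x hx => by
    have := hx.1; positivity
  have hlower : ∀ c, 0 < c → c < 3 - 2 * √2 → ∃ K > 0, ∀ n, K * c ^ n ≤ AR n := by
    intro c hc hcM
    simp only [AR_eq_integral_pow_mul]
    refine exists_mul_pow_le_integral_pow_mul hf hg hf0 hg0 (x₀ := √2 - 1)
      ⟨by linarith, by linarith⟩ hc.le ?_ (by simp only [add_sub_cancel]; positivity)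
    rwa [mul_one_sub_div_one_add_at_sqrt_two_sub_one]
  have hupper (n : ℕ) : AR n ≤ (∫ x in (0:ℝ)..1, (1 + x)⁻¹) * (3 - 2 * √2) ^ n := by
    rw [AR_eq_integral_pow_mul]
    exact integral_pow_mul_le zero_le_one hf hg hf0
      (fun x hx => mul_one_sub_div_one_add_le hx.1) hg0 n
  exact ⟨pos_of_forall_mul_pow_le hM hlower, tendsto_log_div_of_pow_bounds hM hupper hlower⟩
end

section
/- Define the Apéry sequence aₙ := Σ_{k=0}^{n} C(n,k)²·C(n+k,k)²·( Σ_{m=1}^{n} 1/m³ + Σ_{m=1}^{k} (-1)^{m-1}/(2·m³·C(n,m)·C(n+m,m)) ), where C(n,k) denotes the binomial coefficient, and let dₙ := lcm(1,2,…,n). Then dₙ³·aₙ is an integer for every n ≥ 1. -/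
/-- The Apéry sequence `aₙ`. -/
def aperyA (n : ℕ) : ℚ :=
  ∑ k ∈ Finset.range (n + 1),
    (Nat.choose n k : ℚ) ^ 2 * (Nat.choose (n + k) k : ℚ) ^ 2 *
      ((∑ m ∈ Finset.Icc 1 n, 1 / (m : ℚ) ^ 3) +
       (∑ m ∈ Finset.Icc 1 k,
          (-1 : ℚ) ^ (m - 1) /
            (2 * (m : ℚ) ^ 3 * (Nat.choose n m : ℚ) * (Nat.choose (n + m) m : ℚ))))

/-!
Write `P(n, k) = C(n, k) C(n + k, k)` and `c = C(k, m)`. The identity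
`P(n, k) c² = P(n, m) C(n - m, k - m) C(n + k, k - m)` shows that, after multiplying by `c²`,
the `m`-th denominator `2 m³ P(n, m)` of the `k`-th summand divides `d_n³ P(n, k)² c²` as soon as
`2 ∣ P(n, k)` (a central binomial coefficient divides it), `m ∣ d_n`, and `m c ∣ d_n`. The last
fact follows from Kummer's theorem: adding `m` and `k - m` in base `p` produces no carry in the
lowest `v_p(m)` digits, so `v_p(c) ≤ log_p k - v_p(m)`.
-/

open Finset

namespace Nat

theorem factorization_choose_add_factorization_le_log {p k m : ℕ} (hp : p.Prime) (hm : 0 < m)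
    (hmk : m ≤ k) : (k.choose m).factorization p + m.factorization p ≤ log p k := by
  have hmp : m.factorization p ≤ log p k :=
    le_log_of_pow_le hp.one_lt ((ordProj_le p hm.ne').trans hmk)
  have hcarries : {i ∈ Ico 1 (log p k + 1) | p ^ i ≤ m % p ^ i + (k - m) % p ^ i} ⊆
      Ico (m.factorization p + 1) (log p k + 1) := by
    intro i hi
    simp only [mem_filter, mem_Ico] at hi ⊢
    refine ⟨?_, hi.1.2⟩
    by_contra! hi_le
    have hdvd : p ^ i ∣ m := (pow_dvd_pow p (by omega)).trans (ordProj_dvd m p)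
    have := mod_lt (k - m) (pow_pos hp.pos i)
    rw [Nat.mod_eq_zero_of_dvd hdvd] at hi
    omega
  have := card_le_card hcarries
  rw [card_Ico, ← factorization_choose hp hmk (lt_succ_self _)] at this
  omega

theorem mul_choose_dvd_lcmUpto {k m : ℕ} (hm : 0 < m) (hmk : m ≤ k) :
    m * k.choose m ∣ lcmUpto k := by
  have hc : k.choose m ≠ 0 := (choose_pos hmk).ne'
  rw [← factorization_prime_le_iff_dvd (mul_ne_zero hm.ne' hc) (lcmUpto_ne_zero k)]
  intro p hp
  rw [factorization_mul hm.ne' hc, factorization_lcmUpto k hp, Finsupp.add_apply, add_comm]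
  exact factorization_choose_add_factorization_le_log hp hm hmk

theorem dvd_lcmUpto {m n : ℕ} (hm : 0 < m) (hmn : m ≤ n) : m ∣ lcmUpto n :=
  dvd_lcm (mem_Icc.mpr ⟨hm, hmn⟩)

theorem lcmUpto_dvd_lcmUpto {k n : ℕ} (hkn : k ≤ n) : lcmUpto k ∣ lcmUpto n :=
  lcm_mono (Icc_subset_Icc_right hkn)

theorem two_dvd_choose_mul_choose_add {n k : ℕ} (hk : 0 < k) :
    2 ∣ n.choose k * (n + k).choose k := by
  rcases le_or_gt k n with hkn | hnk
  · have h := choose_mul (n := n + k) (k := 2 * k) (s := k) (by omega)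
    rw [show n + k - k = n by omega, show 2 * k - k = k by omega,
      ← centralBinom_eq_two_mul_choose] at h
    exact (two_dvd_centralBinom_of_one_le hk).trans (Dvd.intro_left _ (h.trans (mul_comm _ _)))
  · simp [choose_eq_zero_of_lt hnk]

theorem choose_mul_choose_add_mul_choose_sq {n k m : ℕ} (hmk : m ≤ k) (hkn : k ≤ n) :
    n.choose k * (n + k).choose k * k.choose m ^ 2 =
      n.choose m * (n + m).choose m * ((n - m).choose (k - m) * (n + k).choose (k - m)) := by
  have h₁ : n.choose k * k.choose m = n.choose m * (n - m).choose (k - m) := choose_mul hmk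
  have h₂ := choose_mul (n := n + k) (k := k) (s := k - m) (by omega)
  rw [choose_symm hmk, show n + k - (k - m) = n + m by omega, show k - (k - m) = m by omega] at h₂
  calc n.choose k * (n + k).choose k * k.choose m ^ 2
      = (n.choose k * k.choose m) * ((n + k).choose k * k.choose m) := by ring
    _ = _ := by rw [h₁, h₂]; ring

end Nat

open Nat

theorem apery_summand_denominator_dvd {n k m : ℕ} (hm : 0 < m) (hmk : m ≤ k) (hkn : k ≤ n) :
    2 * m ^ 3 * n.choose m * (n + m).choose m ∣
      lcmUpto n ^ 3 * n.choose k ^ 2 * (n + k).choose k ^ 2 := by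
  have hc : k.choose m ^ 2 ≠ 0 := pow_ne_zero 2 (choose_pos hmk).ne'
  have hmc : m * k.choose m ∣ lcmUpto n :=
    (mul_choose_dvd_lcmUpto hm hmk).trans (lcmUpto_dvd_lcmUpto hkn)
  have hsmall : 2 * m * (m * k.choose m) ^ 2 ∣
      n.choose k * (n + k).choose k * lcmUpto n * lcmUpto n ^ 2 :=
    mul_dvd_mul (mul_dvd_mul (two_dvd_choose_mul_choose_add (hm.trans_le hmk))
      (dvd_lcmUpto hm (hmk.trans hkn))) (pow_dvd_pow_of_dvd hmc 2)
  rw [← Nat.mul_dvd_mul_iff_right (Nat.pos_of_ne_zero hc)]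
  calc 2 * m ^ 3 * n.choose m * (n + m).choose m * k.choose m ^ 2
      = n.choose m * (n + m).choose m * (2 * m * (m * k.choose m) ^ 2) := by ring
    _ ∣ n.choose m * (n + m).choose m * (n.choose k * (n + k).choose k * lcmUpto n *
          lcmUpto n ^ 2 * ((n - m).choose (k - m) * (n + k).choose (k - m))) :=
        mul_dvd_mul_left _ (hsmall.mul_right _)
    _ = lcmUpto n ^ 3 * n.choose k * (n + k).choose k *
          (n.choose k * (n + k).choose k * k.choose m ^ 2) := by
        rw [choose_mul_choose_add_mul_choose_sq hmk hkn]; ring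
    _ = lcmUpto n ^ 3 * n.choose k ^ 2 * (n + k).choose k ^ 2 * k.choose m ^ 2 := by ring

theorem natCast_div_mem_range_intCast {a b : ℕ} (h : b ∣ a) :
    (a : ℚ) / b ∈ (Int.castRingHom ℚ).range :=
  ⟨((a / b : ℕ) : ℤ), by
    simp only [Int.coe_castRingHom, Int.cast_natCast]
    exact Nat.cast_div_charZero h⟩

theorem apery_denominator_general (n : ℕ) :
    ∃ z : ℤ, (dd n : ℚ) ^ 3 * aperyA n = z := by
  rw [show dd n = lcmUpto n from rfl]
  suffices (lcmUpto n : ℚ) ^ 3 * aperyA n ∈ (Int.castRingHom ℚ).range by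
    obtain ⟨z, hz⟩ := this
    exact ⟨z, hz.symm⟩
  rw [aperyA, mul_sum]
  refine Subring.sum_mem _ fun k hk => ?_
  have hkn : k ≤ n := mem_range_succ_iff.mp hk
  rw [mul_add, mul_add, mul_sum, mul_sum, mul_sum, mul_sum]
  refine add_mem (Subring.sum_mem _ fun m hm => ?_) (Subring.sum_mem _ fun m hm => ?_)
  · obtain ⟨hm, hmn⟩ := mem_Icc.mp hm
    convert natCast_div_mem_range_intCast ((pow_dvd_pow_of_dvd (dvd_lcmUpto hm hmn) 3).mul_right
      (n.choose k ^ 2 * (n + k).choose k ^ 2)) using 1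
    push_cast
    ring
  · obtain ⟨hm, hmk⟩ := mem_Icc.mp hm
    convert mul_mem (pow_mem (neg_mem (one_mem _)) (m - 1))
      (natCast_div_mem_range_intCast (apery_summand_denominator_dvd hm hmk hkn)) using 1
    push_cast
    ring

theorem apery_denominator (n : ℕ) (hn : 1 ≤ n) :
    ∃ z : ℤ, (dd n : ℚ) ^ 3 * aperyA n = z :=
  apery_denominator_general n
end

section
/- Let J(n) := ∫₀¹∫₀¹∫₀¹ ( x(1-x)y(1-y)z(1-z)/(1-(1-xy)z) )ⁿ · dx dy dz/(1-(1-xy)z). Then J(n) > 0 for all n and limsup_{n→∞} (log J(n))/n ≤ 4·log(√2 - 1). -/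
open MeasureTheory Filter

/-- Beukers' triple integral `J(n)` over the open unit cube. -/
noncomputable def beukersJ (n : ℕ) : ℝ :=
  ∫ x in Set.Ioo (0:ℝ) 1, ∫ y in Set.Ioo (0:ℝ) 1, ∫ z in Set.Ioo (0:ℝ) 1,
    (x * (1 - x) * y * (1 - y) * z * (1 - z) / (1 - (1 - x * y) * z)) ^ n /
      (1 - (1 - x * y) * z)

/-!
Write the integrand as `f ^ n / D` with `D = 1 - (1 - x y) z` and
`f = x(1-x) y(1-y) z(1-z) / D`. Putting `s = √(x y)`, one has `D ≥ z(1-z)(1+s)²` (the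
difference is `(1 - z - s z)²`) and `x(1-x) y(1-y) ≤ s²(1-s)²`, so
`f ≤ (s(1-s)/(1+s))² ≤ (√2-1)⁴`, the maximum being attained at `s = √2 - 1`. By AM-GM,
`D = (1 - z) + x y z ≥ √(x(1-x) y(1-y) z(1-z))`, so `1 / D` is dominated by the integrable
product `w(x) w(y) w(z)`, `w(t) = 1/√(t(1-t))`, and `J(n) ≤ C (√2-1)^(4n)`.
On the cube `(1/4, 1/2)³` the integrand is at least `512⁻ⁿ`, so `J(n) ≥ 512⁻ⁿ / 64 > 0`; this
lower bound also keeps `log J(n) / n` bounded below, without which the real `limsup` would be a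
junk value.
-/

open Set Real Topology

theorem mul_one_sub_le_sqrt_two_sub_one_sq_mul (s : ℝ) :
    s * (1 - s) ≤ (√2 - 1) ^ 2 * (1 + s) := by
  linear_combination sq_nonneg (s - (√2 - 1)) - s * sq_sqrt (zero_le_two : (0:ℝ) ≤ 2)

theorem mul_one_sub_mul_mul_one_sub_le {x y s : ℝ} (hx : 0 ≤ x) (hy : 0 ≤ y)
    (hsxy : s ^ 2 = x * y) : x * (1 - x) * (y * (1 - y)) ≤ (s * (1 - s)) ^ 2 := by
  have hxy : 2 * s ≤ x + y := by nlinarith [sq_nonneg (x - y)]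
  nlinarith [sq_nonneg s]

theorem mul_one_sub_mul_one_add_sq_le (s z : ℝ) :
    z * (1 - z) * (1 + s) ^ 2 ≤ 1 - (1 - s ^ 2) * z := by
  nlinarith [sq_nonneg (1 - z - s * z)]

theorem beukers_ratio_le {x y z : ℝ} (hx : x ∈ Ioo (0:ℝ) 1) (hy : y ∈ Ioo (0:ℝ) 1)
    (hz : z ∈ Ioo (0:ℝ) 1) :
    x * (1 - x) * y * (1 - y) * z * (1 - z) / (1 - (1 - x * y) * z) ≤ (√2 - 1) ^ 4 := by
  obtain ⟨hx0, hx1⟩ := hx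
  obtain ⟨hy0, hy1⟩ := hy
  obtain ⟨hz0, hz1⟩ := hz
  set s := √(x * y)
  have hs : s ^ 2 = x * y := sq_sqrt (by positivity)
  have hs1 : s < 1 := (sqrt_lt' one_pos).2 (by nlinarith)
  have hD : z * (1 - z) * (1 + s) ^ 2 ≤ 1 - (1 - x * y) * z :=
    hs ▸ mul_one_sub_mul_one_add_sq_le s z
  have hz' : 0 < z * (1 - z) := mul_pos hz0 (by linarith)
  have hN : x * (1 - x) * (y * (1 - y)) ≤ ((√2 - 1) ^ 2 * (1 + s)) ^ 2 :=
    (mul_one_sub_mul_mul_one_sub_le hx0.le hy0.le hs).trans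
      (pow_le_pow_left₀ (mul_nonneg (sqrt_nonneg _) (by linarith))
        (mul_one_sub_le_sqrt_two_sub_one_sq_mul s) 2)
  rw [div_le_iff₀ (lt_of_lt_of_le (by positivity) hD)]
  calc x * (1 - x) * y * (1 - y) * z * (1 - z)
        = x * (1 - x) * (y * (1 - y)) * (z * (1 - z)) := by ring
    _ ≤ ((√2 - 1) ^ 2 * (1 + s)) ^ 2 * (z * (1 - z)) := by gcongr
    _ = (√2 - 1) ^ 4 * (z * (1 - z) * (1 + s) ^ 2) := by ring
    _ ≤ (√2 - 1) ^ 4 * (1 - (1 - x * y) * z) := by gcongr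

noncomputable def arcsineWeight (t : ℝ) : ℝ := (√(t * (1 - t)))⁻¹

theorem arcsineWeight_le_rpow_add_rpow {t : ℝ} (ht : t ∈ Ioo (0:ℝ) 1) :
    arcsineWeight t ≤ t ^ (-(1 / 2) : ℝ) + (1 - t) ^ (-(1 / 2) : ℝ) := by
  obtain ⟨ht0, ht1⟩ := ht
  rw [rpow_neg ht0.le, rpow_neg (by linarith), ← sqrt_eq_rpow, ← sqrt_eq_rpow, arcsineWeight,
    sqrt_mul ht0.le, mul_inv]
  set a := (√t)⁻¹
  set b := (√(1 - t))⁻¹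
  have ha : 0 < a := by positivity
  have hb : 0 < b := by positivity
  have hab : (a * b) ^ 2 = a ^ 2 + b ^ 2 := by
    simp only [a, b, mul_pow, inv_pow, sq_sqrt ht0.le, sq_sqrt (by linarith : 0 ≤ 1 - t)]
    field_simp
    ring
  nlinarith

theorem integrableOn_arcsineWeight : IntegrableOn arcsineWeight (Ioo (0:ℝ) 1) := by
  have hleft : IntegrableOn (fun t : ℝ => t ^ (-(1 / 2) : ℝ)) (Ioo 0 1) :=
    (intervalIntegral.integrableOn_Ioo_rpow_iff one_pos).2 (by norm_num)
  have hright : IntegrableOn (fun t : ℝ => (1 - t) ^ (-(1 / 2) : ℝ)) (Ioo 0 1) := by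
    have := ((intervalIntegrable_iff_integrableOn_Ioo_of_le zero_le_one).2 hleft).comp_sub_left 1
    rw [sub_zero, sub_self] at this
    exact (intervalIntegrable_iff_integrableOn_Ioo_of_le zero_le_one).1 this.symm
  refine (hleft.add hright).mono' (by unfold arcsineWeight; fun_prop) ?_
  filter_upwards [ae_restrict_mem measurableSet_Ioo] with t ht
  rw [norm_of_nonneg (by unfold arcsineWeight; positivity)]
  exact arcsineWeight_le_rpow_add_rpow ht

theorem inv_beukers_denom_le {x y z : ℝ} (hx : x ∈ Ioo (0:ℝ) 1) (hy : y ∈ Ioo (0:ℝ) 1)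
    (hz : z ∈ Ioo (0:ℝ) 1) :
    (1 - (1 - x * y) * z)⁻¹ ≤ arcsineWeight x * arcsineWeight y * arcsineWeight z := by
  obtain ⟨hx0, hx1⟩ := hx
  obtain ⟨hy0, hy1⟩ := hy
  obtain ⟨hz0, hz1⟩ := hz
  have hx' : 0 < x * (1 - x) := mul_pos hx0 (by linarith)
  have hy' : 0 < y * (1 - y) := mul_pos hy0 (by linarith)
  have hz' : 0 < z * (1 - z) := mul_pos hz0 (by linarith)
  have hxyz : 0 < x * y * z * (1 - z) := mul_pos (by positivity) (by linarith)
  have hamgm : 4 * (x * y * z * (1 - z)) ≤ (1 - (1 - x * y) * z) ^ 2 := by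
    nlinarith [sq_nonneg (1 - z - x * y * z)]
  have hprod : x * (1 - x) * (y * (1 - y)) * (z * (1 - z)) ≤ x * y * z * (1 - z) := by
    have : (1 - x) * (1 - y) ≤ 1 := by nlinarith
    nlinarith [mul_pos (mul_pos hx0 hy0) hz']
  have hsqrt : √(x * (1 - x)) * √(y * (1 - y)) * √(z * (1 - z)) ≤ 1 - (1 - x * y) * z := by
    rw [← sqrt_mul hx'.le, ← sqrt_mul (by positivity), sqrt_le_iff]
    exact ⟨by nlinarith [mul_pos (mul_pos hx0 hy0) hz0], by linarith⟩
  simp only [arcsineWeight, ← mul_inv]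
  exact inv_anti₀ (by positivity) hsqrt

noncomputable def beukersIntegrand (n : ℕ) (x y z : ℝ) : ℝ :=
  (x * (1 - x) * y * (1 - y) * z * (1 - z) / (1 - (1 - x * y) * z)) ^ n / (1 - (1 - x * y) * z)

theorem beukers_denom_pos {x y z : ℝ} (hx : x ∈ Ioo (0:ℝ) 1) (hy : y ∈ Ioo (0:ℝ) 1)
    (hz : z ∈ Ioo (0:ℝ) 1) : 0 < 1 - (1 - x * y) * z := by
  nlinarith [mul_pos (mul_pos hx.1 hy.1) hz.1, hz.2]

theorem beukers_ratio_nonneg {x y z : ℝ} (hx : x ∈ Ioo (0:ℝ) 1) (hy : y ∈ Ioo (0:ℝ) 1)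
    (hz : z ∈ Ioo (0:ℝ) 1) :
    0 ≤ x * (1 - x) * y * (1 - y) * z * (1 - z) / (1 - (1 - x * y) * z) := by
  have := beukers_denom_pos hx hy hz
  have := sub_pos.2 hx.2; have := sub_pos.2 hy.2; have := sub_pos.2 hz.2
  have := hx.1; have := hy.1; have := hz.1
  positivity

theorem beukersIntegrand_nonneg (n : ℕ) {x y z : ℝ} (hx : x ∈ Ioo (0:ℝ) 1)
    (hy : y ∈ Ioo (0:ℝ) 1) (hz : z ∈ Ioo (0:ℝ) 1) : 0 ≤ beukersIntegrand n x y z :=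
  div_nonneg (pow_nonneg (beukers_ratio_nonneg hx hy hz) n) (beukers_denom_pos hx hy hz).le

theorem beukersIntegrand_le (n : ℕ) {x y z : ℝ} (hx : x ∈ Ioo (0:ℝ) 1) (hy : y ∈ Ioo (0:ℝ) 1)
    (hz : z ∈ Ioo (0:ℝ) 1) :
    beukersIntegrand n x y z ≤
      ((√2 - 1) ^ 4) ^ n * (arcsineWeight x * arcsineWeight y * arcsineWeight z) := by
  have hD := beukers_denom_pos hx hy hz
  rw [beukersIntegrand, div_eq_mul_inv]
  exact mul_le_mul (pow_le_pow_left₀ (beukers_ratio_nonneg hx hy hz) (beukers_ratio_le hx hy hz) n)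
    (inv_beukers_denom_le hx hy hz) (inv_nonneg.2 hD.le) (by positivity)

theorem le_beukersIntegrand (n : ℕ) {x y z : ℝ} (hx : x ∈ Ioo (1/4:ℝ) (1/2))
    (hy : y ∈ Ioo (1/4:ℝ) (1/2)) (hz : z ∈ Ioo (1/4:ℝ) (1/2)) :
    (512⁻¹ : ℝ) ^ n ≤ beukersIntegrand n x y z := by
  obtain ⟨hx0, hx1⟩ := hx
  obtain ⟨hy0, hy1⟩ := hy
  obtain ⟨hz0, hz1⟩ := hz
  have hxy : 0 < x * y := by nlinarith
  have hD : 0 < 1 - (1 - x * y) * z := by nlinarith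
  have hD1 : 1 - (1 - x * y) * z ≤ 1 := by nlinarith
  have hNx : 8⁻¹ ≤ x * (1 - x) := by nlinarith
  have hNy : 8⁻¹ ≤ y * (1 - y) := by nlinarith
  have hNz : 8⁻¹ ≤ z * (1 - z) := by nlinarith
  have hN : (512⁻¹ : ℝ) ≤ x * (1 - x) * y * (1 - y) * z * (1 - z) := by
    calc (512⁻¹ : ℝ) = 8⁻¹ * 8⁻¹ * 8⁻¹ := by norm_num
      _ ≤ x * (1 - x) * (y * (1 - y)) * (z * (1 - z)) := by gcongr
      _ = _ := by ring
  have hratio := hN.trans (le_div_self (by positivity) hD hD1)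
  exact (pow_le_pow_left₀ (by norm_num) hratio n).trans
    (le_div_self (by positivity) hD hD1)

theorem measurable_beukersIntegrand (n : ℕ) :
    Measurable fun q : (ℝ × ℝ) × ℝ => beukersIntegrand n q.1.1 q.1.2 q.2 := by
  unfold beukersIntegrand
  fun_prop

section SetIntegral

variable {X : Type*} [MeasurableSpace X] {μ : Measure X} {s : Set X} {g p : X → ℝ} {a : ℝ}

theorem setIntegral_le_mul_setIntegral_of_le_mul (hg0 : ∀ x ∈ s, 0 ≤ g x)
    (hgp : ∀ x ∈ s, g x ≤ a * p x) (hp : IntegrableOn p s μ) :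
    ∫ x in s, g x ∂μ ≤ a * ∫ x in s, p x ∂μ := by
  rw [← integral_const_mul]
  exact setIntegral_mono_of_nonneg hg0 hgp (hp.const_mul a)

theorem integrableOn_of_nonneg_of_le_mul (hs : MeasurableSet s)
    (hg : AEStronglyMeasurable g (μ.restrict s)) (hg0 : ∀ x ∈ s, 0 ≤ g x)
    (hgp : ∀ x ∈ s, g x ≤ a * p x) (hp : IntegrableOn p s μ) : IntegrableOn g s μ := by
  refine (hp.const_mul a).mono' hg ((ae_restrict_iff' hs).2 (.of_forall fun x hx => ?_))
  rw [norm_of_nonneg (hg0 x hx)]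
  exact hgp x hx

theorem mul_measureReal_le_setIntegral {t : Set X} {e : ℝ} (hs : MeasurableSet s)
    (hg : IntegrableOn g s μ) (hg0 : ∀ x ∈ s, 0 ≤ g x) (hts : t ⊆ s) (ht : MeasurableSet t)
    (hμt : μ t ≠ ⊤) (he : ∀ x ∈ t, e ≤ g x) : e * μ.real t ≤ ∫ x in s, g x ∂μ :=
  (setIntegral_ge_of_const_le_real ht hμt he (hg.mono_set hts)).trans
    (setIntegral_mono_set hg ((ae_restrict_iff' hs).2 (.of_forall hg0)) hts.eventuallyLE)

end SetIntegral

section IteratedSetIntegral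

variable {X : Type*} [MeasurableSpace X] {μ : Measure X} {s : Set X} {F : X → X → X → ℝ}
  {p : X → ℝ} {C : ℝ}

theorem setIntegral_slice_le (hp : IntegrableOn p s μ)
    (hF0 : ∀ x ∈ s, ∀ y ∈ s, ∀ z ∈ s, 0 ≤ F x y z)
    (hF : ∀ x ∈ s, ∀ y ∈ s, ∀ z ∈ s, F x y z ≤ C * (p x * p y * p z))
    {x y : X} (hx : x ∈ s) (hy : y ∈ s) :
    ∫ z in s, F x y z ∂μ ≤ C * p x * p y * ∫ t in s, p t ∂μ :=
  setIntegral_le_mul_setIntegral_of_le_mul (hF0 x hx y hy)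
    (fun z hz => (hF x hx y hy z hz).trans_eq (by ring)) hp

theorem setIntegral_setIntegral_slice_le (hs : MeasurableSet s) (hp : IntegrableOn p s μ)
    (hF0 : ∀ x ∈ s, ∀ y ∈ s, ∀ z ∈ s, 0 ≤ F x y z)
    (hF : ∀ x ∈ s, ∀ y ∈ s, ∀ z ∈ s, F x y z ≤ C * (p x * p y * p z)) {x : X} (hx : x ∈ s) :
    ∫ y in s, ∫ z in s, F x y z ∂μ ∂μ ≤ C * p x * (∫ t in s, p t ∂μ) * ∫ t in s, p t ∂μ :=
  setIntegral_le_mul_setIntegral_of_le_mul (fun y hy => setIntegral_nonneg hs (hF0 x hx y hy))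
    (fun y hy => (setIntegral_slice_le hp hF0 hF hx hy).trans_eq (by ring)) hp

theorem iteratedSetIntegral_le (hs : MeasurableSet s) (hp : IntegrableOn p s μ)
    (hF0 : ∀ x ∈ s, ∀ y ∈ s, ∀ z ∈ s, 0 ≤ F x y z)
    (hF : ∀ x ∈ s, ∀ y ∈ s, ∀ z ∈ s, F x y z ≤ C * (p x * p y * p z)) :
    ∫ x in s, ∫ y in s, ∫ z in s, F x y z ∂μ ∂μ ∂μ ≤ C * (∫ t in s, p t ∂μ) ^ 3 :=
  calc ∫ x in s, ∫ y in s, ∫ z in s, F x y z ∂μ ∂μ ∂μ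
      ≤ C * (∫ t in s, p t ∂μ) * (∫ t in s, p t ∂μ) * ∫ t in s, p t ∂μ :=
        setIntegral_le_mul_setIntegral_of_le_mul
          (fun x hx => setIntegral_nonneg hs fun y hy => setIntegral_nonneg hs (hF0 x hx y hy))
          (fun x hx => (setIntegral_setIntegral_slice_le hs hp hF0 hF hx).trans_eq (by ring)) hp
    _ = C * (∫ t in s, p t ∂μ) ^ 3 := by ring

theorem mul_measureReal_pow_le_iteratedSetIntegral [SFinite μ] (hs : MeasurableSet s)
    (hFm : Measurable fun q : (X × X) × X => F q.1.1 q.1.2 q.2) (hp : IntegrableOn p s μ)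
    (hF0 : ∀ x ∈ s, ∀ y ∈ s, ∀ z ∈ s, 0 ≤ F x y z)
    (hF : ∀ x ∈ s, ∀ y ∈ s, ∀ z ∈ s, F x y z ≤ C * (p x * p y * p z))
    {t : Set X} {e : ℝ} (hts : t ⊆ s) (ht : MeasurableSet t) (hμt : μ t ≠ ⊤)
    (he : ∀ x ∈ t, ∀ y ∈ t, ∀ z ∈ t, e ≤ F x y z) :
    e * μ.real t ^ 3 ≤ ∫ x in s, ∫ y in s, ∫ z in s, F x y z ∂μ ∂μ ∂μ := by
  have hG₁m : StronglyMeasurable fun q : X × X => ∫ z in s, F q.1 q.2 z ∂μ :=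
    hFm.stronglyMeasurable.integral_prod_right'
  have hG₂m : StronglyMeasurable fun x => ∫ y in s, ∫ z in s, F x y z ∂μ ∂μ :=
    hG₁m.integral_prod_right'
  have hG₁0 : ∀ x ∈ s, ∀ y ∈ s, 0 ≤ ∫ z in s, F x y z ∂μ :=
    fun x hx y hy => setIntegral_nonneg hs (hF0 x hx y hy)
  have hG₂0 : ∀ x ∈ s, 0 ≤ ∫ y in s, ∫ z in s, F x y z ∂μ ∂μ :=
    fun x hx => setIntegral_nonneg hs (hG₁0 x hx)
  have hint₁ : ∀ x ∈ s, ∀ y ∈ s, IntegrableOn (F x y) s μ := fun x hx y hy =>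
    integrableOn_of_nonneg_of_le_mul (a := C * p x * p y) hs
      (show Measurable (F x y) from
        hFm.comp (measurable_prodMk_left (x := (x, y)))).aestronglyMeasurable
      (hF0 x hx y hy) (fun z hz => (hF x hx y hy z hz).trans_eq (by ring)) hp
  have hint₂ : ∀ x ∈ s, IntegrableOn (fun y => ∫ z in s, F x y z ∂μ) s μ := fun x hx =>
    integrableOn_of_nonneg_of_le_mul (a := C * p x * ∫ t in s, p t ∂μ) hs
      (hG₁m.comp_measurable measurable_prodMk_left).aestronglyMeasurable (hG₁0 x hx)
      (fun y hy => (setIntegral_slice_le hp hF0 hF hx hy).trans_eq (by ring)) hp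
  have hint₃ : IntegrableOn (fun x => ∫ y in s, ∫ z in s, F x y z ∂μ ∂μ) s μ :=
    integrableOn_of_nonneg_of_le_mul (a := C * (∫ t in s, p t ∂μ) * ∫ t in s, p t ∂μ) hs
      hG₂m.aestronglyMeasurable hG₂0
      (fun x hx => (setIntegral_setIntegral_slice_le hs hp hF0 hF hx).trans_eq (by ring)) hp
  have hlow₁ : ∀ x ∈ t, ∀ y ∈ t, e * μ.real t ≤ ∫ z in s, F x y z ∂μ := fun x hx y hy =>
    mul_measureReal_le_setIntegral hs (hint₁ x (hts hx) y (hts hy)) (hF0 x (hts hx) y (hts hy))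
      hts ht hμt (he x hx y hy)
  have hlow₂ : ∀ x ∈ t, e * μ.real t * μ.real t ≤ ∫ y in s, ∫ z in s, F x y z ∂μ ∂μ :=
    fun x hx => mul_measureReal_le_setIntegral hs (hint₂ x (hts hx)) (hG₁0 x (hts hx))
      hts ht hμt (hlow₁ x hx)
  calc e * μ.real t ^ 3 = e * μ.real t * μ.real t * μ.real t := by ring
    _ ≤ _ := mul_measureReal_le_setIntegral hs hint₃ hG₂0 hts ht hμt hlow₂

end IteratedSetIntegral

theorem limsup_log_div_le_log_of_geometric_bounds {u : ℕ → ℝ} {A B r c : ℝ} (hA : 0 < A)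
    (hr : 0 < r) (hc : 0 < c) (hlow : ∀ n, A * r ^ n ≤ u n) (hup : ∀ n, u n ≤ B * c ^ n) :
    limsup (fun n : ℕ => log (u n) / n) atTop ≤ log c := by
  have hu : ∀ n, 0 < u n := fun n => (by positivity : 0 < A * r ^ n).trans_le (hlow n)
  have hB : 0 < B := by simpa using (hu 0).trans_le (hup 0)
  have hlim : ∀ a b : ℝ, Tendsto (fun n : ℕ => a + b / n) atTop (𝓝 a) := fun a b => by
    simpa using tendsto_const_nhds.add (tendsto_const_div_atTop_nhds_zero_nat b)
  have hupper : ∀ᶠ n : ℕ in atTop, log (u n) / n ≤ log c + log B / n := by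
    filter_upwards [eventually_gt_atTop 0] with n hn
    rw [div_le_iff₀ (by positivity), add_mul, div_mul_cancel₀ _ (by positivity)]
    calc log (u n) ≤ log (B * c ^ n) := log_le_log (hu n) (hup n)
      _ = log c * n + log B := by rw [log_mul hB.ne' (by positivity), log_pow]; ring
  have hlower : ∀ᶠ n : ℕ in atTop, log r + log A / n ≤ log (u n) / n := by
    filter_upwards [eventually_gt_atTop 0] with n hn
    rw [le_div_iff₀ (by positivity), add_mul, div_mul_cancel₀ _ (by positivity)]
    calc log r * n + log A = log (A * r ^ n) := by
          rw [log_mul hA.ne' (by positivity), log_pow]; ring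
      _ ≤ log (u n) := log_le_log (by positivity) (hlow n)
  calc limsup (fun n : ℕ => log (u n) / n) atTop
      ≤ limsup (fun n : ℕ => log c + log B / n) atTop :=
        limsup_le_limsup hupper ((hlim _ _).isBoundedUnder_ge.mono_ge hlower).isCoboundedUnder_le
          (hlim _ _).isBoundedUnder_le
    _ = log c := (hlim _ _).limsup_eq

theorem beukersJ_pos_and_decay :
    (∀ n : ℕ, 0 < beukersJ n) ∧
    limsup (fun n : ℕ => Real.log (beukersJ n) / (n : ℝ)) atTop ≤
      4 * Real.log (Real.sqrt 2 - 1) := by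
  have hw := integrableOn_arcsineWeight
  have hF0 (n : ℕ) := fun (x : ℝ) (hx : x ∈ Ioo 0 1) y (hy : y ∈ Ioo 0 1) z (hz : z ∈ Ioo 0 1) =>
    beukersIntegrand_nonneg n hx hy hz
  have hF (n : ℕ) := fun (x : ℝ) (hx : x ∈ Ioo 0 1) y (hy : y ∈ Ioo 0 1) z (hz : z ∈ Ioo 0 1) =>
    beukersIntegrand_le n hx hy hz
  have hup (n : ℕ) :
      beukersJ n ≤ (∫ t in Ioo (0:ℝ) 1, arcsineWeight t) ^ 3 * ((√2 - 1) ^ 4) ^ n :=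
    (iteratedSetIntegral_le measurableSet_Ioo hw (hF0 n) (hF n)).trans_eq (mul_comm _ _)
  have hlow (n : ℕ) : 64⁻¹ * (512⁻¹ : ℝ) ^ n ≤ beukersJ n :=
    calc 64⁻¹ * (512⁻¹ : ℝ) ^ n = 512⁻¹ ^ n * volume.real (Ioo (1/4 : ℝ) (1/2)) ^ 3 := by
          rw [volume_real_Ioo_of_le (by norm_num)]; ring
      _ ≤ beukersJ n :=
          mul_measureReal_pow_le_iteratedSetIntegral measurableSet_Ioo
            (measurable_beukersIntegrand n) hw (hF0 n) (hF n) (Ioo_subset_Ioo (by norm_num)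
            (by norm_num)) measurableSet_Ioo measure_Ioo_lt_top.ne
            (fun _ hx _ hy _ hz => le_beukersIntegrand n hx hy hz)
  refine ⟨fun n => (by positivity : (0:ℝ) < 64⁻¹ * 512⁻¹ ^ n).trans_le (hlow n), ?_⟩
  calc limsup (fun n : ℕ => log (beukersJ n) / n) atTop ≤ log ((√2 - 1) ^ 4) :=
        limsup_log_div_le_log_of_geometric_bounds (by norm_num) (by norm_num)
          (pow_pos (sub_pos.2 one_lt_sqrt_two) 4) hlow hup
    _ = 4 * log (√2 - 1) := by rw [log_pow]; norm_num
end

section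
/- Let a ≥ 2 be an integer and define E(n) := ∫₀¹∫₀¹ ( x(1-x)y(1-y)/(1-xy/a) )ⁿ · dx dy/(1-xy/a) and L₂(a) := Σ_{k=1}^{∞} 1/(k²·aᵏ). Then there exist sequences of rational numbers A(n), B(n), C(n) such that E(n) = A(n) + B(n)·L₂(a) + C(n)·log((a-1)/a) for all n ≥ 0. -/
/-! Expanding `1/(1 - xy/a)^(n+1)` as a binomial series and integrating termwise gives
`E(n) = ∑ⱼ C(j+n, n) a⁻ʲ B(n+j+1, n+1)²`, where the Beta values make the `j`-th coefficient a
rational function of `j` whose denominator is `∏_{i ≤ n} (j+n+i+1)²`, of degree `2n+2`, and whose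
numerator has degree `n`. Its partial fraction decomposition has rational coefficients and only
the poles `-(n+i+1)`, of order at most two, so `E(n)` is a rational combination of the series
`∑ⱼ a⁻ʲ/(j+c)` and `∑ⱼ a⁻ʲ/(j+c)²`. Shifting the index, these are rational combinations of
`1`, `∑ₖ a⁻ᵏ/k = -log((a-1)/a)` and `∑ₖ a⁻ᵏ/k² = L₂(a)`. -/

open Finset Nat Polynomial intervalIntegral MeasureTheory
open scoped Interval

/-- The double integral `E(n) = ∫₀¹∫₀¹ (x(1-x)y(1-y)/(1-xy/a))ⁿ dx dy/(1-xy/a)`. -/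
noncomputable def beukersE (a : ℕ) (n : ℕ) : ℝ :=
  ∫ x in (0:ℝ)..1, ∫ y in (0:ℝ)..1,
    (x * (1 - x) * y * (1 - y) / (1 - x * y / (a : ℝ))) ^ n / (1 - x * y / (a : ℝ))

/-- The dilogarithm value `L₂(a) = Σ_{k≥1} 1/(k² aᵏ)`. -/
noncomputable def L2 (a : ℕ) : ℝ :=
  ∑' k : ℕ, 1 / (((k : ℝ) + 1) ^ 2 * (a : ℝ) ^ (k + 1))

namespace Polynomial

theorem isCoprime_X_add_C_of_ne {F : Type*} [Field F] {a b : F} (h : a ≠ b) :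
    IsCoprime (X + C a) (X + C b) := by
  simpa [sub_eq_add_neg] using isCoprime_X_sub_C_of_isUnit_sub (R := F) (a := -a) (b := -b)
    (isUnit_iff_ne_zero.2 (by rw [neg_sub_neg]; exact sub_ne_zero.2 h.symm))

theorem natDegree_prod_X_add_C_pow {R ι : Type*} [CommRing R] [Nontrivial R] (c : ι → R)
    (t : Finset ι) (m : ℕ) : (∏ k ∈ t, (X + C (c k)) ^ m).natDegree = m * #t := by
  rw [natDegree_prod_of_monic _ _ fun k _ => (monic_X_add_C _).pow m]
  simp [mul_comm]

variable {F ι : Type*} [Field F] [DecidableEq ι] {s : Finset ι} {c : ι → F}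

theorem exists_eq_sum_C_mul_X_add_C_pow_mul_prod (hc : Set.InjOn c s) (m : ℕ) {f : F[X]}
    (hf : f.natDegree < m * #s) :
    ∃ r : ι → Fin m → F, f = ∑ i ∈ s, ∑ j : Fin m,
      C (r i j) * (X + C (c i)) ^ (j : ℕ) * ∏ k ∈ s.erase i, (X + C (c k)) ^ m := by
  obtain ⟨q, r, hr, hfqr⟩ := eq_quo_mul_prod_pow_add_sum_rem_mul_prod_pow f
    (g := fun i => X + C (c i)) (fun i _ => monic_X_add_C _)
    (fun i hi j hj hij => isCoprime_X_add_C_of_ne (hc.ne hi hj hij)) (fun _ => m)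
  set r' : ι → Fin m → F := fun i j => (r i j).coeff 0
  set R := ∑ i ∈ s, ∑ j : Fin m,
      C (r' i j) * (X + C (c i)) ^ (j : ℕ) * ∏ k ∈ s.erase i, (X + C (c k)) ^ m
  have hfqR : f = q * ∏ i ∈ s, (X + C (c i)) ^ m + R := by
    refine hfqr.trans (congrArg _ (sum_congr rfl fun i hi => sum_congr rfl fun j _ => ?_))
    rw [← eq_C_of_degree_le_zero (Nat.WithBot.lt_one_iff_le_zero.1 (by simpa using hr i hi j))]
  have hR : R.natDegree < m * #s := by
    refine (natDegree_sum_le_of_forall_le _ _ fun i hi => ?_).trans_lt (Nat.sub_one_lt_of_lt hf)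
    refine natDegree_sum_le_of_forall_le _ _ fun j _ => ?_
    obtain ⟨k, hk⟩ : ∃ k, #s = k + 1 :=
      ⟨#s - 1, (Nat.sub_one_add_one (card_ne_zero_of_mem hi)).symm⟩
    calc _ ≤ (C (r' i j) * (X + C (c i)) ^ (j : ℕ)).natDegree
            + (∏ k ∈ s.erase i, (X + C (c k)) ^ m).natDegree := natDegree_mul_le
      _ ≤ j + m * k := by
          rw [natDegree_prod_X_add_C_pow, card_erase_of_mem hi, hk, Nat.add_sub_cancel]
          gcongr
          exact natDegree_C_mul_le _ _ |>.trans (natDegree_pow_le_of_le _ (natDegree_X_add_C _).le)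
            |>.trans (mul_one _).le
      _ ≤ m * #s - 1 := by rw [hk, mul_add, mul_one]; omega
  have hq : q = 0 := by
    by_contra hq
    have hqD := (natDegree_sub_le _ _).trans_lt (max_lt hf hR)
    rw [hfqR, add_sub_cancel_right, mul_comm,
      (monic_prod_of_monic _ _ fun i _ => (monic_X_add_C _).pow m).natDegree_mul' hq,
      natDegree_prod_X_add_C_pow] at hqD
    omega
  exact ⟨r', by rw [hfqR, hq, zero_mul, zero_add]⟩

theorem exists_aeval_div_prod_pow_eq_sum {L : Type*} [Field L] [Algebra F L]
    (hc : Set.InjOn c s) (m : ℕ) {f : F[X]} (hf : f.natDegree < m * #s) :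
    ∃ r : ι → Fin m → F, ∀ t : L, (∀ i ∈ s, t + algebraMap F L (c i) ≠ 0) →
      aeval t f / ∏ i ∈ s, (t + algebraMap F L (c i)) ^ m
        = ∑ i ∈ s, ∑ j : Fin m,
            algebraMap F L (r i j) / (t + algebraMap F L (c i)) ^ (m - j) := by
  obtain ⟨r, hr⟩ := exists_eq_sum_C_mul_X_add_C_pow_mul_prod hc m hf
  refine ⟨r, fun t ht => ?_⟩
  simp only [hr, map_sum, map_mul, map_pow, map_prod, map_add, aeval_X, aeval_C, sum_div]
  refine sum_congr rfl fun i hi => sum_congr rfl fun j _ => ?_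
  have hP : ∏ k ∈ s.erase i, (t + algebraMap F L (c k)) ^ m ≠ 0 :=
    prod_ne_zero_iff.2 fun k hk => pow_ne_zero _ (ht k (mem_of_mem_erase hk))
  rw [← mul_prod_erase s _ hi, pow_sub₀ _ (ht i hi) j.2.le]
  field_simp

end Polynomial

theorem integral_pow_mul_one_sub_pow (m p : ℕ) :
    ∫ x in (0 : ℝ)..1, x ^ m * (1 - x) ^ p
      = p ! / ∏ i ∈ range (p + 1), ((m : ℝ) + i + 1) := by
  induction p generalizing m with
  | zero => simp
  | succ p ih =>
    have hsplit : ∫ x in (0 : ℝ)..1, x ^ m * (1 - x) ^ (p + 1)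
        = (∫ x in (0 : ℝ)..1, x ^ m * (1 - x) ^ p)
          - ∫ x in (0 : ℝ)..1, x ^ (m + 1) * (1 - x) ^ p := by
      rw [← integral_sub ((by fun_prop : Continuous _).intervalIntegrable _ _)
        ((by fun_prop : Continuous _).intervalIntegrable _ _)]
      exact integral_congr fun x _ => by ring
    have hlast := prod_range_succ (fun i : ℕ => (m : ℝ) + i + 1) (p + 1)
    have hfirst := prod_range_succ' (fun i : ℕ => (m : ℝ) + i + 1) (p + 1)
    have hshift : ∏ i ∈ range (p + 1), (((m + 1 : ℕ) : ℝ) + i + 1)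
        = ∏ i ∈ range (p + 1), ((m : ℝ) + ((i + 1 : ℕ) : ℝ) + 1) :=
      prod_congr rfl fun i _ => by push_cast; ring
    rw [hsplit, ih, ih, hshift, hlast]
    have hP : ∏ i ∈ range (p + 1), ((m : ℝ) + i + 1) ≠ 0 :=
      prod_ne_zero_iff.2 fun i _ => by positivity
    have hP' : ∏ i ∈ range (p + 1), ((m : ℝ) + ((i + 1 : ℕ) : ℝ) + 1) ≠ 0 :=
      prod_ne_zero_iff.2 fun i _ => by positivity
    generalize ∏ i ∈ range (p + 1), ((m : ℝ) + i + 1) = P at *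
    generalize ∏ i ∈ range (p + 1), ((m : ℝ) + ((i + 1 : ℕ) : ℝ) + 1) = P' at *
    rw [hlast] at hfirst
    rw [factorial_succ]
    push_cast at hfirst ⊢
    rw [div_sub_div _ _ hP hP',
      div_eq_div_iff (mul_ne_zero hP hP') (mul_ne_zero hP (by positivity))]
    linear_combination -(p ! : ℝ) * P * hfirst

theorem choose_mul_factorial_eq_prod (n j : ℕ) :
    ((j + n).choose n : ℝ) * n ! = ∏ i ∈ range n, ((j : ℝ) + (i + 1)) := by
  rw [← Nat.cast_mul, mul_comm, ← ascFactorial_eq_factorial_mul_choose,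
    ascFactorial_eq_prod_range]
  push_cast
  exact prod_congr rfl fun i _ => by ring

theorem choose_mul_integral_sq_eq (n j : ℕ) :
    ((j + n).choose n : ℝ) * (∫ x in (0 : ℝ)..1, x ^ (n + j) * (1 - x) ^ n) ^ 2
      = (n ! * ∏ i ∈ range n, ((j : ℝ) + (i + 1)))
          / ∏ i ∈ range (n + 1), ((j : ℝ) + (n + i + 1)) ^ 2 := by
  have hden : ∏ i ∈ range (n + 1), (((n + j : ℕ) : ℝ) + i + 1)
      = ∏ i ∈ range (n + 1), ((j : ℝ) + (n + i + 1)) :=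
    prod_congr rfl fun i _ => by push_cast; ring
  rw [integral_pow_mul_one_sub_pow, hden, ← choose_mul_factorial_eq_prod, prod_pow]
  ring

theorem exists_choose_mul_integral_sq_eq_sum (n : ℕ) :
    ∃ r : ℕ → Fin 2 → ℚ, ∀ j : ℕ,
      ((j + n).choose n : ℝ) * (∫ x in (0 : ℝ)..1, x ^ (n + j) * (1 - x) ^ n) ^ 2
        = ∑ i ∈ range (n + 1), ∑ e : Fin 2,
            (r i e : ℝ) / ((j : ℝ) + (n + i + 1 : ℕ)) ^ (2 - (e : ℕ)) := by
  obtain ⟨r, hr⟩ := exists_aeval_div_prod_pow_eq_sum (L := ℝ) (s := range (n + 1))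
    (c := fun i : ℕ => (n + i + 1 : ℚ)) (fun i _ k _ h => by simpa using h) 2
    (f := C (n ! : ℚ) * ∏ i ∈ range n, (X + C ((i : ℚ) + 1)))
    ((natDegree_C_mul_le _ _).trans_lt (by
      rw [natDegree_prod_of_monic _ _ fun i _ => monic_X_add_C _]
      simp only [natDegree_X_add_C, sum_const, card_range, smul_eq_mul, mul_one]
      omega))
  refine ⟨r, fun j => ?_⟩
  have hpf := hr (j : ℝ) (fun i _ => by simp only [map_add, map_natCast, map_one]; positivity)
  simp only [map_mul, map_prod, map_add, aeval_X, map_natCast, map_one, eq_ratCast] at hpf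
  rw [choose_mul_integral_sq_eq, hpf]
  push_cast
  rfl

theorem intervalIntegral.hasSum_integral_of_norm_le_of_summable {ι E : Type*} [Countable ι]
    [NormedAddCommGroup E] [NormedSpace ℝ E] {F : ι → ℝ → E} {f : ℝ → E} {M : ι → ℝ}
    {a b : ℝ}
    (hF : ∀ i, AEStronglyMeasurable (F i) (volume.restrict (Ι a b)))
    (hFM : ∀ i, ∀ t ∈ Ι a b, ‖F i t‖ ≤ M i) (hM : Summable M)
    (hFf : ∀ t ∈ Ι a b, HasSum (F · t) (f t)) :
    HasSum (fun i => ∫ t in a..b, F i t) (∫ t in a..b, f t) :=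
  hasSum_integral_of_dominated_convergence (fun i _ => M i) hF (fun i => ae_of_all _ (hFM i))
    (ae_of_all _ fun _ _ => hM) intervalIntegrable_const (ae_of_all _ hFf)

theorem mem_Icc_of_mem_uIoc_zero_one {x : ℝ} (hx : x ∈ Ι (0 : ℝ) 1) : x ∈ Set.Icc 0 1 := by
  rw [Set.uIoc_of_le zero_le_one] at hx
  exact Set.Ioc_subset_Icc_self hx

theorem abs_pow_mul_one_sub_pow_le_one {x : ℝ} (hx : x ∈ Set.Icc 0 1) (m p : ℕ) :
    |x ^ m * (1 - x) ^ p| ≤ 1 := by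
  obtain ⟨hx0, hx1⟩ := hx
  have hx1' : 0 ≤ 1 - x := by linarith
  rw [abs_of_nonneg (by positivity)]
  exact mul_le_one₀ (pow_le_one₀ hx0 hx1) (pow_nonneg hx1' _) (pow_le_one₀ hx1' (by linarith))

theorem abs_integral_pow_mul_one_sub_pow_le_one (m p : ℕ) :
    |∫ x in (0 : ℝ)..1, x ^ m * (1 - x) ^ p| ≤ 1 := by
  simpa using norm_integral_le_of_norm_le_const (C := 1) (f := fun x : ℝ => x ^ m * (1 - x) ^ p)
    fun x hx => (abs_pow_mul_one_sub_pow_le_one (mem_Icc_of_mem_uIoc_zero_one hx) m p :)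

theorem abs_mul_le_of_abs_le_one {c u : ℝ} (hc : 0 ≤ c) (hu : |u| ≤ 1) : |c * u| ≤ c := by
  rw [abs_mul, abs_of_nonneg hc]
  exact mul_le_of_le_one_right hc hu

theorem norm_inv_lt_one_of_one_lt {a : ℝ} (ha : 1 < a) : ‖a⁻¹‖ < 1 := by
  rw [norm_inv, Real.norm_eq_abs, abs_of_pos (by linarith)]
  exact inv_lt_one_of_one_lt₀ ha

theorem norm_mul_div_lt_one {a x y : ℝ} (ha : 1 < a) (hx : x ∈ Set.Icc 0 1)
    (hy : y ∈ Set.Icc 0 1) : ‖x * y / a‖ < 1 := by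
  obtain ⟨hx0, hx1⟩ := hx
  obtain ⟨hy0, hy1⟩ := hy
  rw [Real.norm_eq_abs, abs_of_nonneg (by positivity), div_lt_one (by linarith)]
  nlinarith

theorem hasSum_beukers_integrand {a x y : ℝ} (n : ℕ) (h : ‖x * y / a‖ < 1) :
    HasSum (fun j : ℕ => ((j + n).choose n : ℝ) * a⁻¹ ^ j
        * ((x ^ (n + j) * (1 - x) ^ n) * (y ^ (n + j) * (1 - y) ^ n)))
      ((x * (1 - x) * y * (1 - y) / (1 - x * y / a)) ^ n / (1 - x * y / a)) := by
  have hterm (j : ℕ) : ((j + n).choose n : ℝ) * a⁻¹ ^ j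
      * ((x ^ (n + j) * (1 - x) ^ n) * (y ^ (n + j) * (1 - y) ^ n))
      = ((j + n).choose n : ℝ) * (x * y / a) ^ j * (x * (1 - x) * y * (1 - y)) ^ n := by
    simp only [mul_pow, div_pow]
    ring
  have hsum : (x * (1 - x) * y * (1 - y) / (1 - x * y / a)) ^ n / (1 - x * y / a)
      = 1 / (1 - x * y / a) ^ (n + 1) * (x * (1 - x) * y * (1 - y)) ^ n := by
    rw [div_pow, div_div, ← pow_succ]
    ring
  rw [funext hterm, hsum]
  exact (hasSum_choose_mul_geometric_of_norm_lt_one n h).mul_right _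

theorem hasSum_integral_beukers_integrand {a x : ℝ} (ha : 1 < a) (n : ℕ)
    (hx : x ∈ Set.Icc 0 1) :
    HasSum (fun j : ℕ => ((j + n).choose n : ℝ) * a⁻¹ ^ j
        * ((x ^ (n + j) * (1 - x) ^ n) * ∫ y in (0 : ℝ)..1, y ^ (n + j) * (1 - y) ^ n))
      (∫ y in (0 : ℝ)..1,
        (x * (1 - x) * y * (1 - y) / (1 - x * y / a)) ^ n / (1 - x * y / a)) := by
  simp_rw [← intervalIntegral.integral_const_mul]
  refine hasSum_integral_of_norm_le_of_summable
    (M := fun j => ((j + n).choose n : ℝ) * a⁻¹ ^ j)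
    (fun j => (by fun_prop : Continuous _).aestronglyMeasurable) (fun j y hy => ?_)
    (summable_choose_mul_geometric_of_norm_lt_one n (norm_inv_lt_one_of_one_lt ha))
    (fun y hy => hasSum_beukers_integrand n
      (norm_mul_div_lt_one ha hx (mem_Icc_of_mem_uIoc_zero_one hy)))
  refine abs_mul_le_of_abs_le_one (by positivity) ?_
  rw [abs_mul]
  exact mul_le_one₀ (abs_pow_mul_one_sub_pow_le_one hx _ _) (abs_nonneg _)
    (abs_pow_mul_one_sub_pow_le_one (mem_Icc_of_mem_uIoc_zero_one hy) _ _)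

theorem hasSum_beukersE {a : ℕ} (ha : 1 < a) (n : ℕ) :
    HasSum (fun j : ℕ => ((j + n).choose n : ℝ) * (a : ℝ)⁻¹ ^ j
        * (∫ x in (0 : ℝ)..1, x ^ (n + j) * (1 - x) ^ n) ^ 2) (beukersE a n) := by
  have ha' : (1 : ℝ) < a := by exact_mod_cast ha
  have hterm (j : ℕ) : ((j + n).choose n : ℝ) * (a : ℝ)⁻¹ ^ j
      * (∫ x in (0 : ℝ)..1, x ^ (n + j) * (1 - x) ^ n) ^ 2
      = ∫ x in (0 : ℝ)..1, ((j + n).choose n : ℝ) * (a : ℝ)⁻¹ ^ j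
          * ((x ^ (n + j) * (1 - x) ^ n) * ∫ y in (0 : ℝ)..1, y ^ (n + j) * (1 - y) ^ n) := by
    rw [intervalIntegral.integral_const_mul, intervalIntegral.integral_mul_const, sq]
  rw [funext hterm]
  refine hasSum_integral_of_norm_le_of_summable
    (M := fun j => ((j + n).choose n : ℝ) * (a : ℝ)⁻¹ ^ j)
    (fun j => (by fun_prop : Continuous _).aestronglyMeasurable) (fun j x hx => ?_)
    (summable_choose_mul_geometric_of_norm_lt_one n (norm_inv_lt_one_of_one_lt ha'))
    (fun x hx => hasSum_integral_beukers_integrand ha' n (mem_Icc_of_mem_uIoc_zero_one hx))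
  refine abs_mul_le_of_abs_le_one (by positivity) ?_
  rw [abs_mul]
  exact mul_le_one₀ (abs_pow_mul_one_sub_pow_le_one (mem_Icc_of_mem_uIoc_zero_one hx) _ _)
    (abs_nonneg _) (abs_integral_pow_mul_one_sub_pow_le_one _ _)

theorem Submodule.tsum_nat_add_mem {R M : Type*} [Ring R] [AddCommGroup M] [Module R M]
    [TopologicalSpace M] [IsTopologicalAddGroup M] [T2Space M] (V : Submodule R M) {f : ℕ → M}
    (hf : Summable f) (hfV : ∀ k, f k ∈ V) (hV : ∑' k, f k ∈ V) (c : ℕ) :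
    ∑' k, f (k + c) ∈ V := by
  rw [← hf.sum_add_tsum_nat_add c] at hV
  exact (V.add_mem_iff_right (V.sum_mem fun k _ => hfV k)).1 hV

noncomputable def beukersSpan (a : ℕ) : Submodule ℚ ℝ :=
  Submodule.span ℚ {1, L2 a, Real.log (((a : ℝ) - 1) / a)}

section BeukersSpan

variable {a : ℕ}

theorem ratCast_mem_beukersSpan (q : ℚ) : (q : ℝ) ∈ beukersSpan a := by
  have h1 : (1 : ℝ) ∈ beukersSpan a := Submodule.subset_span (by simp)
  simpa [Rat.smul_def] using (beukersSpan a).smul_mem q h1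

theorem L2_mem_beukersSpan : L2 a ∈ beukersSpan a := Submodule.subset_span (by simp)

theorem log_mem_beukersSpan : Real.log (((a : ℝ) - 1) / a) ∈ beukersSpan a :=
  Submodule.subset_span (by simp)

theorem summable_inv_pow_div_pow (ha : 1 < a) (s : ℕ) :
    Summable fun k : ℕ => (a : ℝ)⁻¹ ^ k / (k : ℝ) ^ s := by
  have ha' : (1 : ℝ) < a := by exact_mod_cast ha
  refine Summable.of_nonneg_of_le (fun k => by positivity) (fun k => ?_)
    (summable_geometric_of_lt_one (by positivity) (inv_lt_one_of_one_lt₀ ha'))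
  rw [← Nat.cast_pow]
  exact div_nat_le_self_of_nonnneg (by positivity) _

theorem inv_pow_div_add_pow_eq (ha : a ≠ 0) (s c k : ℕ) :
    (a : ℝ)⁻¹ ^ k / ((k : ℝ) + c) ^ s
      = (a : ℝ) ^ c * ((a : ℝ)⁻¹ ^ (k + c) / ((k + c : ℕ) : ℝ) ^ s) := by
  have : (a : ℝ) ≠ 0 := by exact_mod_cast ha
  rw [pow_add, Nat.cast_add,
    show ∀ y : ℝ, (a : ℝ) ^ c * ((a : ℝ)⁻¹ ^ k * (a : ℝ)⁻¹ ^ c / y)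
      = (a : ℝ)⁻¹ ^ k / y * ((a : ℝ) * (a : ℝ)⁻¹) ^ c from fun y => by ring,
    mul_inv_cancel₀ this, one_pow, mul_one]

theorem summable_inv_pow_div_add_pow (ha : 1 < a) (s c : ℕ) :
    Summable fun k : ℕ => (a : ℝ)⁻¹ ^ k / ((k : ℝ) + c) ^ s := by
  simp_rw [inv_pow_div_add_pow_eq (by omega : a ≠ 0)]
  exact ((summable_nat_add_iff c).2 (summable_inv_pow_div_pow ha s)).mul_left _

theorem tsum_inv_pow_div_add_pow_mem (ha : 1 < a) (s c : ℕ)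
    (h : ∑' k : ℕ, (a : ℝ)⁻¹ ^ k / (k : ℝ) ^ s ∈ beukersSpan a) :
    ∑' k : ℕ, (a : ℝ)⁻¹ ^ k / ((k : ℝ) + c) ^ s ∈ beukersSpan a := by
  simp_rw [inv_pow_div_add_pow_eq (by omega : a ≠ 0), tsum_mul_left]
  have hmem := (beukersSpan a).tsum_nat_add_mem (summable_inv_pow_div_pow ha s)
    (fun k => by simpa using ratCast_mem_beukersSpan (a := a) ((a : ℚ)⁻¹ ^ k / (k : ℚ) ^ s))
    h c
  simpa [Rat.smul_def] using (beukersSpan a).smul_mem ((a : ℚ) ^ c) hmem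

-- The `k = 0` terms below are `1 / 0 = 0`, so these are the series over `k ≥ 1`.
theorem tsum_inv_pow_div_mem (ha : 1 < a) :
    ∑' k : ℕ, (a : ℝ)⁻¹ ^ k / (k : ℝ) ^ 1 ∈ beukersSpan a := by
  have ha' : (1 : ℝ) < a := by exact_mod_cast ha
  have hlog := Real.hasSum_pow_div_log_of_abs_lt_one (x := (a : ℝ)⁻¹)
    (by rw [abs_of_pos (by positivity)]; exact inv_lt_one_of_one_lt₀ ha')
  rw [show 1 - (a : ℝ)⁻¹ = ((a : ℝ) - 1) / a by field_simp] at hlog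
  have hsum : HasSum (fun k : ℕ => (a : ℝ)⁻¹ ^ k / (k : ℝ) ^ 1)
      (-Real.log (((a : ℝ) - 1) / a)) := by
    rw [← hasSum_nat_add_iff' 1]
    simpa using hlog
  rw [hsum.tsum_eq]
  exact neg_mem log_mem_beukersSpan

theorem tsum_inv_pow_div_sq_mem (ha : 1 < a) :
    ∑' k : ℕ, (a : ℝ)⁻¹ ^ k / (k : ℝ) ^ 2 ∈ beukersSpan a := by
  rw [(summable_inv_pow_div_pow ha 2).tsum_eq_zero_add]
  convert L2_mem_beukersSpan using 1
  rw [L2, Nat.cast_zero, zero_pow two_ne_zero, div_zero, zero_add]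
  exact tsum_congr fun k => by
    push_cast
    rw [inv_pow, one_div, mul_inv, div_eq_mul_inv, mul_comm]

theorem beukersE_mem_beukersSpan (ha : 1 < a) (n : ℕ) : beukersE a n ∈ beukersSpan a := by
  obtain ⟨r, hr⟩ := exists_choose_mul_integral_sq_eq_sum n
  have hterm (j : ℕ) : ((j + n).choose n : ℝ) * (a : ℝ)⁻¹ ^ j
      * (∫ x in (0 : ℝ)..1, x ^ (n + j) * (1 - x) ^ n) ^ 2
      = ∑ i ∈ range (n + 1), ∑ e : Fin 2,
          (r i e : ℝ)
            * ((a : ℝ)⁻¹ ^ j / ((j : ℝ) + (n + i + 1 : ℕ)) ^ (2 - (e : ℕ))) := by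
    rw [mul_right_comm, hr, sum_mul]
    exact sum_congr rfl fun i _ => by rw [sum_mul]; exact sum_congr rfl fun e _ => by ring
  have hsum (i : ℕ) (e : Fin 2) : Summable fun j : ℕ =>
      (r i e : ℝ) * ((a : ℝ)⁻¹ ^ j / ((j : ℝ) + (n + i + 1 : ℕ)) ^ (2 - (e : ℕ))) :=
    (summable_inv_pow_div_add_pow ha _ _).mul_left _
  rw [← (hasSum_beukersE ha n).tsum_eq, tsum_congr hterm,
    Summable.tsum_finsetSum fun i _ => summable_sum fun e _ => hsum i e]
  refine Submodule.sum_mem _ fun i _ => ?_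
  rw [Summable.tsum_finsetSum fun e _ => hsum i e]
  refine Submodule.sum_mem _ fun e _ => ?_
  rw [tsum_mul_left, ← Rat.smul_def]
  refine Submodule.smul_mem _ _ (tsum_inv_pow_div_add_pow_mem ha _ _ ?_)
  fin_cases e
  · exact tsum_inv_pow_div_sq_mem ha
  · exact tsum_inv_pow_div_mem ha

end BeukersSpan

theorem beukersE_rational_structure (a : ℕ) (ha : 2 ≤ a) :
    ∃ A B C : ℕ → ℚ, ∀ n : ℕ,
      beukersE a n = (A n : ℝ) + (B n : ℝ) * L2 a +
        (C n : ℝ) * Real.log (((a : ℝ) - 1) / (a : ℝ)) := by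
  choose A B C hE using fun n => Submodule.mem_span_triple.1 (beukersE_mem_beukersSpan ha n)
  refine ⟨A, B, C, fun n => ?_⟩
  simp [← hE n, Rat.smul_def]
end
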